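/- arXiv:1910.05753 — 4 statements merged into one kernel-verified Lean document; each statement's English description precedes it below -/
import Mathlib

section
/- Let Γ be the additive submonoid of ℕ generated by {4, 6, 13} (a numerical semigroup with conductor 16). Let a₅, a₇, a₉, a₁₁, a₁₅, b₇, b₉, b₁₁, b₁₅, c₁₅ ∈ ℂ and set x := t⁴ + a₅t⁵ + a₇t⁷ + a₉t⁹ + a₁₁t¹¹ + a₁₅t¹⁵, y := t⁶ + b₇t⁷ + b₉t⁹ + b₁₁t¹¹ + b₁₅t¹⁵, z := t¹³ + c₁₅t¹⁵ in ℂ[[t]], and R := ⟨x, y, z⟩ + t¹⁶·ℂ[[t]]. Then Γ_R = Γ if and only if 5a₅³ + 3a₅²b₇ − 2a₅b₇² + 3a₅c₁₅ − 3a₇ − b₇³ − 2b₇c₁₅ + 2b₉ = 0. -/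
noncomputable section

/-- `f ∈ ℂ[[t]]` has order exactly `n`: the coefficient of `t^n` is nonzero and all
lower coefficients vanish. -/
def HasOrder (f : PowerSeries ℂ) (n : ℕ) : Prop :=
  PowerSeries.coeff n f ≠ 0 ∧ ∀ m < n, PowerSeries.coeff m f = 0

/-- The semigroup of orders of (nonzero) elements of a set `S ⊆ ℂ[[t]]`. -/
def sgp (S : Set (PowerSeries ℂ)) : Set ℕ :=
  {n | ∃ f ∈ S, HasOrder f n}

/-- A `ℂ`-subalgebra `R ⊆ ℂ[[t]]` is closed if every `f` which is approximated to
arbitrary order by elements of `R` lies in `R`. -/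
def IsClosedSubalg (R : Subalgebra ℂ (PowerSeries ℂ)) : Prop :=
  ∀ f : PowerSeries ℂ,
    (∀ N : ℕ, ∃ g ∈ R, ∀ m < N, PowerSeries.coeff m (f - g) = 0) → f ∈ R

/-- The set `⟨x₀,…,x_{k-1}⟩ + t^c·ℂ[[t]] = {p(x₀,…,x_{k-1}) + h}`. -/
def adjSet {k : ℕ} (x : Fin k → PowerSeries ℂ) (c : ℕ) : Set (PowerSeries ℂ) :=
  {f | ∃ (p : MvPolynomial (Fin k) ℂ) (h : PowerSeries ℂ),
    f = MvPolynomial.aeval x p + (PowerSeries.X : PowerSeries ℂ) ^ c * h}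

/-- `c` is the conductor of `Γ`: the least natural number such that all `n ≥ c` lie in `Γ`. -/
def IsConductor (Γ : AddSubmonoid ℕ) (c : ℕ) : Prop :=
  (∀ n, c ≤ n → n ∈ Γ) ∧ ∀ c' < c, ∃ n, c' ≤ n ∧ n ∉ Γ

/-- `v 0 < v 1 < ⋯` minimally generates `Γ`. -/
def MinGen (Γ : AddSubmonoid ℕ) {k : ℕ} (v : Fin k → ℕ) : Prop :=
  StrictMono v ∧ AddSubmonoid.closure (Set.range v) = Γ ∧
    ∀ s : Set ℕ, s ⊂ Set.range v → AddSubmonoid.closure s ≠ Γ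

/-- `(x 0, …, x (k-1))` is in normal form with respect to `Γ` (with generators `v`):
the coefficient of `t^(v i)` in `x i` is `1`, and every other nonzero coefficient occurs
at an exponent which is a gap of `Γ` greater than `v i`. -/
def NormalFormT (Γ : AddSubmonoid ℕ) {k : ℕ} (v : Fin k → ℕ)
    (x : Fin k → PowerSeries ℂ) : Prop :=
  ∀ i, PowerSeries.coeff (v i) (x i) = 1 ∧
    ∀ m, m ≠ v i → PowerSeries.coeff m (x i) ≠ 0 → m ∉ Γ ∧ v i < m

set_option maxHeartbeats 4000000 in
open PowerSeries in
/-- for `Γ = ⟨4,6,13⟩` and the normal-form triple `(x,y,z)` below,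
`R = ⟨x,y,z⟩ + t¹⁶·ℂ[[t]]` has semigroup `Γ` iff
`5a₅³ + 3a₅²b₇ − 2a₅b₇² + 3a₅c₁₅ − 3a₇ − b₇³ − 2b₇c₁₅ + 2b₉ = 0`. -/
theorem stmt11 (a₅ a₇ a₉ a₁₁ a₁₅ b₇ b₉ b₁₁ b₁₅ c₁₅ : ℂ)
    (x y z : PowerSeries ℂ)
    (hx : x = X ^ 4 + C a₅ * X ^ 5 + C a₇ * X ^ 7 + C a₉ * X ^ 9 +
      C a₁₁ * X ^ 11 + C a₁₅ * X ^ 15)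
    (hy : y = X ^ 6 + C b₇ * X ^ 7 + C b₉ * X ^ 9 + C b₁₁ * X ^ 11 +
      C b₁₅ * X ^ 15)
    (hz : z = X ^ 13 + C c₁₅ * X ^ 15) :
    sgp (adjSet ![x, y, z] 16) =
        (AddSubmonoid.closure ({4, 6, 13} : Set ℕ) : Set ℕ) ↔
      5 * a₅ ^ 3 + 3 * a₅ ^ 2 * b₇ - 2 * a₅ * b₇ ^ 2 + 3 * a₅ * c₁₅ - 3 * a₇ -
        b₇ ^ 3 - 2 * b₇ * c₁₅ + 2 * b₉ = 0 := by
  have cx0 : coeff 0 x = 0 := by rw [hx]; simp [coeff_X_pow]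
  have cx1 : coeff 1 x = 0 := by rw [hx]; simp [coeff_X_pow]
  have cx2 : coeff 2 x = 0 := by rw [hx]; simp [coeff_X_pow]
  have cx3 : coeff 3 x = 0 := by rw [hx]; simp [coeff_X_pow]
  have cx4 : coeff 4 x = 1 := by rw [hx]; simp [coeff_X_pow]
  have cx5 : coeff 5 x = a₅ := by rw [hx]; simp [coeff_X_pow]
  have cx6 : coeff 6 x = 0 := by rw [hx]; simp [coeff_X_pow]
  have cx7 : coeff 7 x = a₇ := by rw [hx]; simp [coeff_X_pow]
  have cx8 : coeff 8 x = 0 := by rw [hx]; simp [coeff_X_pow]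
  have cx9 : coeff 9 x = a₉ := by rw [hx]; simp [coeff_X_pow]
  have cx10 : coeff 10 x = 0 := by rw [hx]; simp [coeff_X_pow]
  have cx11 : coeff 11 x = a₁₁ := by rw [hx]; simp [coeff_X_pow]
  have cx12 : coeff 12 x = 0 := by rw [hx]; simp [coeff_X_pow]
  have cx13 : coeff 13 x = 0 := by rw [hx]; simp [coeff_X_pow]
  have cx14 : coeff 14 x = 0 := by rw [hx]; simp [coeff_X_pow]
  have cx15 : coeff 15 x = a₁₅ := by rw [hx]; simp [coeff_X_pow]
  have cy0 : coeff 0 y = 0 := by rw [hy]; simp [coeff_X_pow]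
  have cy1 : coeff 1 y = 0 := by rw [hy]; simp [coeff_X_pow]
  have cy2 : coeff 2 y = 0 := by rw [hy]; simp [coeff_X_pow]
  have cy3 : coeff 3 y = 0 := by rw [hy]; simp [coeff_X_pow]
  have cy4 : coeff 4 y = 0 := by rw [hy]; simp [coeff_X_pow]
  have cy5 : coeff 5 y = 0 := by rw [hy]; simp [coeff_X_pow]
  have cy6 : coeff 6 y = 1 := by rw [hy]; simp [coeff_X_pow]
  have cy7 : coeff 7 y = b₇ := by rw [hy]; simp [coeff_X_pow]
  have cy8 : coeff 8 y = 0 := by rw [hy]; simp [coeff_X_pow]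
  have cy9 : coeff 9 y = b₉ := by rw [hy]; simp [coeff_X_pow]
  have cy10 : coeff 10 y = 0 := by rw [hy]; simp [coeff_X_pow]
  have cy11 : coeff 11 y = b₁₁ := by rw [hy]; simp [coeff_X_pow]
  have cy12 : coeff 12 y = 0 := by rw [hy]; simp [coeff_X_pow]
  have cy13 : coeff 13 y = 0 := by rw [hy]; simp [coeff_X_pow]
  have cy14 : coeff 14 y = 0 := by rw [hy]; simp [coeff_X_pow]
  have cy15 : coeff 15 y = b₁₅ := by rw [hy]; simp [coeff_X_pow]
  have cz0 : coeff 0 z = 0 := by rw [hz]; simp [coeff_X_pow]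
  have cz1 : coeff 1 z = 0 := by rw [hz]; simp [coeff_X_pow]
  have cz2 : coeff 2 z = 0 := by rw [hz]; simp [coeff_X_pow]
  have cz3 : coeff 3 z = 0 := by rw [hz]; simp [coeff_X_pow]
  have cz4 : coeff 4 z = 0 := by rw [hz]; simp [coeff_X_pow]
  have cz5 : coeff 5 z = 0 := by rw [hz]; simp [coeff_X_pow]
  have cz6 : coeff 6 z = 0 := by rw [hz]; simp [coeff_X_pow]
  have cz7 : coeff 7 z = 0 := by rw [hz]; simp [coeff_X_pow]
  have cz8 : coeff 8 z = 0 := by rw [hz]; simp [coeff_X_pow]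
  have cz9 : coeff 9 z = 0 := by rw [hz]; simp [coeff_X_pow]
  have cz10 : coeff 10 z = 0 := by rw [hz]; simp [coeff_X_pow]
  have cz11 : coeff 11 z = 0 := by rw [hz]; simp [coeff_X_pow]
  have cz12 : coeff 12 z = 0 := by rw [hz]; simp [coeff_X_pow]
  have cz13 : coeff 13 z = 1 := by rw [hz]; simp [coeff_X_pow]
  have cz14 : coeff 14 z = 0 := by rw [hz]; simp [coeff_X_pow]
  have cz15 : coeff 15 z = c₁₅ := by rw [hz]; simp [coeff_X_pow]
  have cxx0 : coeff 0 (x*x) = 0 := by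
    rw [PowerSeries.coeff_mul, Finset.Nat.sum_antidiagonal_eq_sum_range_succ_mk]
    simp only [Finset.sum_range_succ, Finset.sum_range_zero, Nat.reduceSub, cx0]
    try norm_num
    try ring
  have cxx1 : coeff 1 (x*x) = 0 := by
    rw [PowerSeries.coeff_mul, Finset.Nat.sum_antidiagonal_eq_sum_range_succ_mk]
    simp only [Finset.sum_range_succ, Finset.sum_range_zero, Nat.reduceSub, cx0, cx1]
    try norm_num
    try ring
  have cxx2 : coeff 2 (x*x) = 0 := by
    rw [PowerSeries.coeff_mul, Finset.Nat.sum_antidiagonal_eq_sum_range_succ_mk]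
    simp only [Finset.sum_range_succ, Finset.sum_range_zero, Nat.reduceSub, cx0, cx1, cx2]
    try norm_num
    try ring
  have cxx3 : coeff 3 (x*x) = 0 := by
    rw [PowerSeries.coeff_mul, Finset.Nat.sum_antidiagonal_eq_sum_range_succ_mk]
    simp only [Finset.sum_range_succ, Finset.sum_range_zero, Nat.reduceSub, cx0, cx1, cx2, cx3]
    try norm_num
    try ring
  have cxx4 : coeff 4 (x*x) = 0 := by
    rw [PowerSeries.coeff_mul, Finset.Nat.sum_antidiagonal_eq_sum_range_succ_mk]
    simp only [Finset.sum_range_succ, Finset.sum_range_zero, Nat.reduceSub, cx0, cx1, cx2, cx3, cx4]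
    try norm_num
    try ring
  have cxx5 : coeff 5 (x*x) = 0 := by
    rw [PowerSeries.coeff_mul, Finset.Nat.sum_antidiagonal_eq_sum_range_succ_mk]
    simp only [Finset.sum_range_succ, Finset.sum_range_zero, Nat.reduceSub, cx0, cx1, cx2, cx3, cx4, cx5]
    try norm_num
    try ring
  have cxx6 : coeff 6 (x*x) = 0 := by
    rw [PowerSeries.coeff_mul, Finset.Nat.sum_antidiagonal_eq_sum_range_succ_mk]
    simp only [Finset.sum_range_succ, Finset.sum_range_zero, Nat.reduceSub, cx0, cx1, cx2, cx3, cx4, cx5, cx6]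
    try norm_num
    try ring
  have cxx7 : coeff 7 (x*x) = 0 := by
    rw [PowerSeries.coeff_mul, Finset.Nat.sum_antidiagonal_eq_sum_range_succ_mk]
    simp only [Finset.sum_range_succ, Finset.sum_range_zero, Nat.reduceSub, cx0, cx1, cx2, cx3, cx4, cx5, cx6, cx7]
    try norm_num
    try ring
  have cxx8 : coeff 8 (x*x) = 1 := by
    rw [PowerSeries.coeff_mul, Finset.Nat.sum_antidiagonal_eq_sum_range_succ_mk]
    simp only [Finset.sum_range_succ, Finset.sum_range_zero, Nat.reduceSub, cx0, cx1, cx2, cx3, cx4, cx5, cx6, cx7, cx8]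
    try norm_num
    try ring
  have cxx9 : coeff 9 (x*x) = 2*a₅ := by
    rw [PowerSeries.coeff_mul, Finset.Nat.sum_antidiagonal_eq_sum_range_succ_mk]
    simp only [Finset.sum_range_succ, Finset.sum_range_zero, Nat.reduceSub, cx0, cx1, cx2, cx3, cx4, cx5, cx6, cx7, cx8, cx9]
    try norm_num
    try ring
  have cxx10 : coeff 10 (x*x) = a₅^2 := by
    rw [PowerSeries.coeff_mul, Finset.Nat.sum_antidiagonal_eq_sum_range_succ_mk]
    simp only [Finset.sum_range_succ, Finset.sum_range_zero, Nat.reduceSub, cx0, cx1, cx2, cx3, cx4, cx5, cx6, cx7, cx8, cx9, cx10]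
    try norm_num
    try ring
  have cxx11 : coeff 11 (x*x) = 2*a₇ := by
    rw [PowerSeries.coeff_mul, Finset.Nat.sum_antidiagonal_eq_sum_range_succ_mk]
    simp only [Finset.sum_range_succ, Finset.sum_range_zero, Nat.reduceSub, cx0, cx1, cx2, cx3, cx4, cx5, cx6, cx7, cx8, cx9, cx10, cx11]
    try norm_num
    try ring
  have cxx12 : coeff 12 (x*x) = 2*a₅*a₇ := by
    rw [PowerSeries.coeff_mul, Finset.Nat.sum_antidiagonal_eq_sum_range_succ_mk]
    simp only [Finset.sum_range_succ, Finset.sum_range_zero, Nat.reduceSub, cx0, cx1, cx2, cx3, cx4, cx5, cx6, cx7, cx8, cx9, cx10, cx11, cx12]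
    try norm_num
    try ring
  have cxx13 : coeff 13 (x*x) = 2*a₉ := by
    rw [PowerSeries.coeff_mul, Finset.Nat.sum_antidiagonal_eq_sum_range_succ_mk]
    simp only [Finset.sum_range_succ, Finset.sum_range_zero, Nat.reduceSub, cx0, cx1, cx2, cx3, cx4, cx5, cx6, cx7, cx8, cx9, cx10, cx11, cx12, cx13]
    try norm_num
    try ring
  have cxx14 : coeff 14 (x*x) = 2*a₅*a₉+a₇^2 := by
    rw [PowerSeries.coeff_mul, Finset.Nat.sum_antidiagonal_eq_sum_range_succ_mk]
    simp only [Finset.sum_range_succ, Finset.sum_range_zero, Nat.reduceSub, cx0, cx1, cx2, cx3, cx4, cx5, cx6, cx7, cx8, cx9, cx10, cx11, cx12, cx13, cx14]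
    try norm_num
    try ring
  have cxx15 : coeff 15 (x*x) = 2*a₁₁ := by
    rw [PowerSeries.coeff_mul, Finset.Nat.sum_antidiagonal_eq_sum_range_succ_mk]
    simp only [Finset.sum_range_succ, Finset.sum_range_zero, Nat.reduceSub, cx0, cx1, cx2, cx3, cx4, cx5, cx6, cx7, cx8, cx9, cx10, cx11, cx12, cx13, cx14, cx15]
    try norm_num
    try ring
  have cxy0 : coeff 0 (x*y) = 0 := by
    rw [PowerSeries.coeff_mul, Finset.Nat.sum_antidiagonal_eq_sum_range_succ_mk]
    simp only [Finset.sum_range_succ, Finset.sum_range_zero, Nat.reduceSub, cx0, cy0]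
    try norm_num
    try ring
  have cxy1 : coeff 1 (x*y) = 0 := by
    rw [PowerSeries.coeff_mul, Finset.Nat.sum_antidiagonal_eq_sum_range_succ_mk]
    simp only [Finset.sum_range_succ, Finset.sum_range_zero, Nat.reduceSub, cx0, cx1, cy0, cy1]
    try norm_num
    try ring
  have cxy2 : coeff 2 (x*y) = 0 := by
    rw [PowerSeries.coeff_mul, Finset.Nat.sum_antidiagonal_eq_sum_range_succ_mk]
    simp only [Finset.sum_range_succ, Finset.sum_range_zero, Nat.reduceSub, cx0, cx1, cx2, cy0, cy1, cy2]
    try norm_num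
    try ring
  have cxy3 : coeff 3 (x*y) = 0 := by
    rw [PowerSeries.coeff_mul, Finset.Nat.sum_antidiagonal_eq_sum_range_succ_mk]
    simp only [Finset.sum_range_succ, Finset.sum_range_zero, Nat.reduceSub, cx0, cx1, cx2, cx3, cy0, cy1, cy2, cy3]
    try norm_num
    try ring
  have cxy4 : coeff 4 (x*y) = 0 := by
    rw [PowerSeries.coeff_mul, Finset.Nat.sum_antidiagonal_eq_sum_range_succ_mk]
    simp only [Finset.sum_range_succ, Finset.sum_range_zero, Nat.reduceSub, cx0, cx1, cx2, cx3, cx4, cy0, cy1, cy2, cy3, cy4]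
    try norm_num
    try ring
  have cxy5 : coeff 5 (x*y) = 0 := by
    rw [PowerSeries.coeff_mul, Finset.Nat.sum_antidiagonal_eq_sum_range_succ_mk]
    simp only [Finset.sum_range_succ, Finset.sum_range_zero, Nat.reduceSub, cx0, cx1, cx2, cx3, cx4, cx5, cy0, cy1, cy2, cy3, cy4, cy5]
    try norm_num
    try ring
  have cxy6 : coeff 6 (x*y) = 0 := by
    rw [PowerSeries.coeff_mul, Finset.Nat.sum_antidiagonal_eq_sum_range_succ_mk]
    simp only [Finset.sum_range_succ, Finset.sum_range_zero, Nat.reduceSub, cx0, cx1, cx2, cx3, cx4, cx5, cx6, cy0, cy1, cy2, cy3, cy4, cy5, cy6]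
    try norm_num
    try ring
  have cxy7 : coeff 7 (x*y) = 0 := by
    rw [PowerSeries.coeff_mul, Finset.Nat.sum_antidiagonal_eq_sum_range_succ_mk]
    simp only [Finset.sum_range_succ, Finset.sum_range_zero, Nat.reduceSub, cx0, cx1, cx2, cx3, cx4, cx5, cx6, cx7, cy0, cy1, cy2, cy3, cy4, cy5, cy6, cy7]
    try norm_num
    try ring
  have cxy8 : coeff 8 (x*y) = 0 := by
    rw [PowerSeries.coeff_mul, Finset.Nat.sum_antidiagonal_eq_sum_range_succ_mk]
    simp only [Finset.sum_range_succ, Finset.sum_range_zero, Nat.reduceSub, cx0, cx1, cx2, cx3, cx4, cx5, cx6, cx7, cx8, cy0, cy1, cy2, cy3, cy4, cy5, cy6, cy7, cy8]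
    try norm_num
    try ring
  have cxy9 : coeff 9 (x*y) = 0 := by
    rw [PowerSeries.coeff_mul, Finset.Nat.sum_antidiagonal_eq_sum_range_succ_mk]
    simp only [Finset.sum_range_succ, Finset.sum_range_zero, Nat.reduceSub, cx0, cx1, cx2, cx3, cx4, cx5, cx6, cx7, cx8, cx9, cy0, cy1, cy2, cy3, cy4, cy5, cy6, cy7, cy8, cy9]
    try norm_num
    try ring
  have cxy10 : coeff 10 (x*y) = 1 := by
    rw [PowerSeries.coeff_mul, Finset.Nat.sum_antidiagonal_eq_sum_range_succ_mk]
    simp only [Finset.sum_range_succ, Finset.sum_range_zero, Nat.reduceSub, cx0, cx1, cx2, cx3, cx4, cx5, cx6, cx7, cx8, cx9, cx10, cy0, cy1, cy2, cy3, cy4, cy5, cy6, cy7, cy8, cy9, cy10]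
    try norm_num
    try ring
  have cxy11 : coeff 11 (x*y) = a₅+b₇ := by
    rw [PowerSeries.coeff_mul, Finset.Nat.sum_antidiagonal_eq_sum_range_succ_mk]
    simp only [Finset.sum_range_succ, Finset.sum_range_zero, Nat.reduceSub, cx0, cx1, cx2, cx3, cx4, cx5, cx6, cx7, cx8, cx9, cx10, cx11, cy0, cy1, cy2, cy3, cy4, cy5, cy6, cy7, cy8, cy9, cy10, cy11]
    try norm_num
    try ring
  have cxy12 : coeff 12 (x*y) = a₅*b₇ := by
    rw [PowerSeries.coeff_mul, Finset.Nat.sum_antidiagonal_eq_sum_range_succ_mk]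
    simp only [Finset.sum_range_succ, Finset.sum_range_zero, Nat.reduceSub, cx0, cx1, cx2, cx3, cx4, cx5, cx6, cx7, cx8, cx9, cx10, cx11, cx12, cy0, cy1, cy2, cy3, cy4, cy5, cy6, cy7, cy8, cy9, cy10, cy11, cy12]
    try norm_num
    try ring
  have cxy13 : coeff 13 (x*y) = a₇+b₉ := by
    rw [PowerSeries.coeff_mul, Finset.Nat.sum_antidiagonal_eq_sum_range_succ_mk]
    simp only [Finset.sum_range_succ, Finset.sum_range_zero, Nat.reduceSub, cx0, cx1, cx2, cx3, cx4, cx5, cx6, cx7, cx8, cx9, cx10, cx11, cx12, cx13, cy0, cy1, cy2, cy3, cy4, cy5, cy6, cy7, cy8, cy9, cy10, cy11, cy12, cy13]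
    try norm_num
    try ring
  have cxy14 : coeff 14 (x*y) = a₅*b₉+a₇*b₇ := by
    rw [PowerSeries.coeff_mul, Finset.Nat.sum_antidiagonal_eq_sum_range_succ_mk]
    simp only [Finset.sum_range_succ, Finset.sum_range_zero, Nat.reduceSub, cx0, cx1, cx2, cx3, cx4, cx5, cx6, cx7, cx8, cx9, cx10, cx11, cx12, cx13, cx14, cy0, cy1, cy2, cy3, cy4, cy5, cy6, cy7, cy8, cy9, cy10, cy11, cy12, cy13, cy14]
    try norm_num
    try ring
  have cxy15 : coeff 15 (x*y) = a₉+b₁₁ := by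
    rw [PowerSeries.coeff_mul, Finset.Nat.sum_antidiagonal_eq_sum_range_succ_mk]
    simp only [Finset.sum_range_succ, Finset.sum_range_zero, Nat.reduceSub, cx0, cx1, cx2, cx3, cx4, cx5, cx6, cx7, cx8, cx9, cx10, cx11, cx12, cx13, cx14, cx15, cy0, cy1, cy2, cy3, cy4, cy5, cy6, cy7, cy8, cy9, cy10, cy11, cy12, cy13, cy14, cy15]
    try norm_num
    try ring
  have cyy0 : coeff 0 (y*y) = 0 := by
    rw [PowerSeries.coeff_mul, Finset.Nat.sum_antidiagonal_eq_sum_range_succ_mk]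
    simp only [Finset.sum_range_succ, Finset.sum_range_zero, Nat.reduceSub, cy0]
    try norm_num
    try ring
  have cyy1 : coeff 1 (y*y) = 0 := by
    rw [PowerSeries.coeff_mul, Finset.Nat.sum_antidiagonal_eq_sum_range_succ_mk]
    simp only [Finset.sum_range_succ, Finset.sum_range_zero, Nat.reduceSub, cy0, cy1]
    try norm_num
    try ring
  have cyy2 : coeff 2 (y*y) = 0 := by
    rw [PowerSeries.coeff_mul, Finset.Nat.sum_antidiagonal_eq_sum_range_succ_mk]
    simp only [Finset.sum_range_succ, Finset.sum_range_zero, Nat.reduceSub, cy0, cy1, cy2]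
    try norm_num
    try ring
  have cyy3 : coeff 3 (y*y) = 0 := by
    rw [PowerSeries.coeff_mul, Finset.Nat.sum_antidiagonal_eq_sum_range_succ_mk]
    simp only [Finset.sum_range_succ, Finset.sum_range_zero, Nat.reduceSub, cy0, cy1, cy2, cy3]
    try norm_num
    try ring
  have cyy4 : coeff 4 (y*y) = 0 := by
    rw [PowerSeries.coeff_mul, Finset.Nat.sum_antidiagonal_eq_sum_range_succ_mk]
    simp only [Finset.sum_range_succ, Finset.sum_range_zero, Nat.reduceSub, cy0, cy1, cy2, cy3, cy4]
    try norm_num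
    try ring
  have cyy5 : coeff 5 (y*y) = 0 := by
    rw [PowerSeries.coeff_mul, Finset.Nat.sum_antidiagonal_eq_sum_range_succ_mk]
    simp only [Finset.sum_range_succ, Finset.sum_range_zero, Nat.reduceSub, cy0, cy1, cy2, cy3, cy4, cy5]
    try norm_num
    try ring
  have cyy6 : coeff 6 (y*y) = 0 := by
    rw [PowerSeries.coeff_mul, Finset.Nat.sum_antidiagonal_eq_sum_range_succ_mk]
    simp only [Finset.sum_range_succ, Finset.sum_range_zero, Nat.reduceSub, cy0, cy1, cy2, cy3, cy4, cy5, cy6]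
    try norm_num
    try ring
  have cyy7 : coeff 7 (y*y) = 0 := by
    rw [PowerSeries.coeff_mul, Finset.Nat.sum_antidiagonal_eq_sum_range_succ_mk]
    simp only [Finset.sum_range_succ, Finset.sum_range_zero, Nat.reduceSub, cy0, cy1, cy2, cy3, cy4, cy5, cy6, cy7]
    try norm_num
    try ring
  have cyy8 : coeff 8 (y*y) = 0 := by
    rw [PowerSeries.coeff_mul, Finset.Nat.sum_antidiagonal_eq_sum_range_succ_mk]
    simp only [Finset.sum_range_succ, Finset.sum_range_zero, Nat.reduceSub, cy0, cy1, cy2, cy3, cy4, cy5, cy6, cy7, cy8]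
    try norm_num
    try ring
  have cyy9 : coeff 9 (y*y) = 0 := by
    rw [PowerSeries.coeff_mul, Finset.Nat.sum_antidiagonal_eq_sum_range_succ_mk]
    simp only [Finset.sum_range_succ, Finset.sum_range_zero, Nat.reduceSub, cy0, cy1, cy2, cy3, cy4, cy5, cy6, cy7, cy8, cy9]
    try norm_num
    try ring
  have cyy10 : coeff 10 (y*y) = 0 := by
    rw [PowerSeries.coeff_mul, Finset.Nat.sum_antidiagonal_eq_sum_range_succ_mk]
    simp only [Finset.sum_range_succ, Finset.sum_range_zero, Nat.reduceSub, cy0, cy1, cy2, cy3, cy4, cy5, cy6, cy7, cy8, cy9, cy10]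
    try norm_num
    try ring
  have cyy11 : coeff 11 (y*y) = 0 := by
    rw [PowerSeries.coeff_mul, Finset.Nat.sum_antidiagonal_eq_sum_range_succ_mk]
    simp only [Finset.sum_range_succ, Finset.sum_range_zero, Nat.reduceSub, cy0, cy1, cy2, cy3, cy4, cy5, cy6, cy7, cy8, cy9, cy10, cy11]
    try norm_num
    try ring
  have cyy12 : coeff 12 (y*y) = 1 := by
    rw [PowerSeries.coeff_mul, Finset.Nat.sum_antidiagonal_eq_sum_range_succ_mk]
    simp only [Finset.sum_range_succ, Finset.sum_range_zero, Nat.reduceSub, cy0, cy1, cy2, cy3, cy4, cy5, cy6, cy7, cy8, cy9, cy10, cy11, cy12]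
    try norm_num
    try ring
  have cyy13 : coeff 13 (y*y) = 2*b₇ := by
    rw [PowerSeries.coeff_mul, Finset.Nat.sum_antidiagonal_eq_sum_range_succ_mk]
    simp only [Finset.sum_range_succ, Finset.sum_range_zero, Nat.reduceSub, cy0, cy1, cy2, cy3, cy4, cy5, cy6, cy7, cy8, cy9, cy10, cy11, cy12, cy13]
    try norm_num
    try ring
  have cyy14 : coeff 14 (y*y) = b₇^2 := by
    rw [PowerSeries.coeff_mul, Finset.Nat.sum_antidiagonal_eq_sum_range_succ_mk]
    simp only [Finset.sum_range_succ, Finset.sum_range_zero, Nat.reduceSub, cy0, cy1, cy2, cy3, cy4, cy5, cy6, cy7, cy8, cy9, cy10, cy11, cy12, cy13, cy14]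
    try norm_num
    try ring
  have cyy15 : coeff 15 (y*y) = 2*b₉ := by
    rw [PowerSeries.coeff_mul, Finset.Nat.sum_antidiagonal_eq_sum_range_succ_mk]
    simp only [Finset.sum_range_succ, Finset.sum_range_zero, Nat.reduceSub, cy0, cy1, cy2, cy3, cy4, cy5, cy6, cy7, cy8, cy9, cy10, cy11, cy12, cy13, cy14, cy15]
    try norm_num
    try ring
  have cxxx0 : coeff 0 (x*x*x) = 0 := by
    rw [PowerSeries.coeff_mul, Finset.Nat.sum_antidiagonal_eq_sum_range_succ_mk]
    simp only [Finset.sum_range_succ, Finset.sum_range_zero, Nat.reduceSub, cxx0, cx0]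
    try norm_num
    try ring
  have cxxx1 : coeff 1 (x*x*x) = 0 := by
    rw [PowerSeries.coeff_mul, Finset.Nat.sum_antidiagonal_eq_sum_range_succ_mk]
    simp only [Finset.sum_range_succ, Finset.sum_range_zero, Nat.reduceSub, cxx0, cxx1, cx0, cx1]
    try norm_num
    try ring
  have cxxx2 : coeff 2 (x*x*x) = 0 := by
    rw [PowerSeries.coeff_mul, Finset.Nat.sum_antidiagonal_eq_sum_range_succ_mk]
    simp only [Finset.sum_range_succ, Finset.sum_range_zero, Nat.reduceSub, cxx0, cxx1, cxx2, cx0, cx1, cx2]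
    try norm_num
    try ring
  have cxxx3 : coeff 3 (x*x*x) = 0 := by
    rw [PowerSeries.coeff_mul, Finset.Nat.sum_antidiagonal_eq_sum_range_succ_mk]
    simp only [Finset.sum_range_succ, Finset.sum_range_zero, Nat.reduceSub, cxx0, cxx1, cxx2, cxx3, cx0, cx1, cx2, cx3]
    try norm_num
    try ring
  have cxxx4 : coeff 4 (x*x*x) = 0 := by
    rw [PowerSeries.coeff_mul, Finset.Nat.sum_antidiagonal_eq_sum_range_succ_mk]
    simp only [Finset.sum_range_succ, Finset.sum_range_zero, Nat.reduceSub, cxx0, cxx1, cxx2, cxx3, cxx4, cx0, cx1, cx2, cx3, cx4]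
    try norm_num
    try ring
  have cxxx5 : coeff 5 (x*x*x) = 0 := by
    rw [PowerSeries.coeff_mul, Finset.Nat.sum_antidiagonal_eq_sum_range_succ_mk]
    simp only [Finset.sum_range_succ, Finset.sum_range_zero, Nat.reduceSub, cxx0, cxx1, cxx2, cxx3, cxx4, cxx5, cx0, cx1, cx2, cx3, cx4, cx5]
    try norm_num
    try ring
  have cxxx6 : coeff 6 (x*x*x) = 0 := by
    rw [PowerSeries.coeff_mul, Finset.Nat.sum_antidiagonal_eq_sum_range_succ_mk]
    simp only [Finset.sum_range_succ, Finset.sum_range_zero, Nat.reduceSub, cxx0, cxx1, cxx2, cxx3, cxx4, cxx5, cxx6, cx0, cx1, cx2, cx3, cx4, cx5, cx6]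
    try norm_num
    try ring
  have cxxx7 : coeff 7 (x*x*x) = 0 := by
    rw [PowerSeries.coeff_mul, Finset.Nat.sum_antidiagonal_eq_sum_range_succ_mk]
    simp only [Finset.sum_range_succ, Finset.sum_range_zero, Nat.reduceSub, cxx0, cxx1, cxx2, cxx3, cxx4, cxx5, cxx6, cxx7, cx0, cx1, cx2, cx3, cx4, cx5, cx6, cx7]
    try norm_num
    try ring
  have cxxx8 : coeff 8 (x*x*x) = 0 := by
    rw [PowerSeries.coeff_mul, Finset.Nat.sum_antidiagonal_eq_sum_range_succ_mk]
    simp only [Finset.sum_range_succ, Finset.sum_range_zero, Nat.reduceSub, cxx0, cxx1, cxx2, cxx3, cxx4, cxx5, cxx6, cxx7, cxx8, cx0, cx1, cx2, cx3, cx4, cx5, cx6, cx7, cx8]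
    try norm_num
    try ring
  have cxxx9 : coeff 9 (x*x*x) = 0 := by
    rw [PowerSeries.coeff_mul, Finset.Nat.sum_antidiagonal_eq_sum_range_succ_mk]
    simp only [Finset.sum_range_succ, Finset.sum_range_zero, Nat.reduceSub, cxx0, cxx1, cxx2, cxx3, cxx4, cxx5, cxx6, cxx7, cxx8, cxx9, cx0, cx1, cx2, cx3, cx4, cx5, cx6, cx7, cx8, cx9]
    try norm_num
    try ring
  have cxxx10 : coeff 10 (x*x*x) = 0 := by
    rw [PowerSeries.coeff_mul, Finset.Nat.sum_antidiagonal_eq_sum_range_succ_mk]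
    simp only [Finset.sum_range_succ, Finset.sum_range_zero, Nat.reduceSub, cxx0, cxx1, cxx2, cxx3, cxx4, cxx5, cxx6, cxx7, cxx8, cxx9, cxx10, cx0, cx1, cx2, cx3, cx4, cx5, cx6, cx7, cx8, cx9, cx10]
    try norm_num
    try ring
  have cxxx11 : coeff 11 (x*x*x) = 0 := by
    rw [PowerSeries.coeff_mul, Finset.Nat.sum_antidiagonal_eq_sum_range_succ_mk]
    simp only [Finset.sum_range_succ, Finset.sum_range_zero, Nat.reduceSub, cxx0, cxx1, cxx2, cxx3, cxx4, cxx5, cxx6, cxx7, cxx8, cxx9, cxx10, cxx11, cx0, cx1, cx2, cx3, cx4, cx5, cx6, cx7, cx8, cx9, cx10, cx11]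
    try norm_num
    try ring
  have cxxx12 : coeff 12 (x*x*x) = 1 := by
    rw [PowerSeries.coeff_mul, Finset.Nat.sum_antidiagonal_eq_sum_range_succ_mk]
    simp only [Finset.sum_range_succ, Finset.sum_range_zero, Nat.reduceSub, cxx0, cxx1, cxx2, cxx3, cxx4, cxx5, cxx6, cxx7, cxx8, cxx9, cxx10, cxx11, cxx12, cx0, cx1, cx2, cx3, cx4, cx5, cx6, cx7, cx8, cx9, cx10, cx11, cx12]
    try norm_num
    try ring
  have cxxx13 : coeff 13 (x*x*x) = 3*a₅ := by
    rw [PowerSeries.coeff_mul, Finset.Nat.sum_antidiagonal_eq_sum_range_succ_mk]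
    simp only [Finset.sum_range_succ, Finset.sum_range_zero, Nat.reduceSub, cxx0, cxx1, cxx2, cxx3, cxx4, cxx5, cxx6, cxx7, cxx8, cxx9, cxx10, cxx11, cxx12, cxx13, cx0, cx1, cx2, cx3, cx4, cx5, cx6, cx7, cx8, cx9, cx10, cx11, cx12, cx13]
    try norm_num
    try ring
  have cxxx14 : coeff 14 (x*x*x) = 3*a₅^2 := by
    rw [PowerSeries.coeff_mul, Finset.Nat.sum_antidiagonal_eq_sum_range_succ_mk]
    simp only [Finset.sum_range_succ, Finset.sum_range_zero, Nat.reduceSub, cxx0, cxx1, cxx2, cxx3, cxx4, cxx5, cxx6, cxx7, cxx8, cxx9, cxx10, cxx11, cxx12, cxx13, cxx14, cx0, cx1, cx2, cx3, cx4, cx5, cx6, cx7, cx8, cx9, cx10, cx11, cx12, cx13, cx14]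
    try norm_num
    try ring
  have cxxx15 : coeff 15 (x*x*x) = a₅^3+3*a₇ := by
    rw [PowerSeries.coeff_mul, Finset.Nat.sum_antidiagonal_eq_sum_range_succ_mk]
    simp only [Finset.sum_range_succ, Finset.sum_range_zero, Nat.reduceSub, cxx0, cxx1, cxx2, cxx3, cxx4, cxx5, cxx6, cxx7, cxx8, cxx9, cxx10, cxx11, cxx12, cxx13, cxx14, cxx15, cx0, cx1, cx2, cx3, cx4, cx5, cx6, cx7, cx8, cx9, cx10, cx11, cx12, cx13, cx14, cx15]
    try norm_num
    try ring
  have cxxy0 : coeff 0 (x*x*y) = 0 := by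
    rw [PowerSeries.coeff_mul, Finset.Nat.sum_antidiagonal_eq_sum_range_succ_mk]
    simp only [Finset.sum_range_succ, Finset.sum_range_zero, Nat.reduceSub, cxx0, cy0]
    try norm_num
    try ring
  have cxxy1 : coeff 1 (x*x*y) = 0 := by
    rw [PowerSeries.coeff_mul, Finset.Nat.sum_antidiagonal_eq_sum_range_succ_mk]
    simp only [Finset.sum_range_succ, Finset.sum_range_zero, Nat.reduceSub, cxx0, cxx1, cy0, cy1]
    try norm_num
    try ring
  have cxxy2 : coeff 2 (x*x*y) = 0 := by
    rw [PowerSeries.coeff_mul, Finset.Nat.sum_antidiagonal_eq_sum_range_succ_mk]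
    simp only [Finset.sum_range_succ, Finset.sum_range_zero, Nat.reduceSub, cxx0, cxx1, cxx2, cy0, cy1, cy2]
    try norm_num
    try ring
  have cxxy3 : coeff 3 (x*x*y) = 0 := by
    rw [PowerSeries.coeff_mul, Finset.Nat.sum_antidiagonal_eq_sum_range_succ_mk]
    simp only [Finset.sum_range_succ, Finset.sum_range_zero, Nat.reduceSub, cxx0, cxx1, cxx2, cxx3, cy0, cy1, cy2, cy3]
    try norm_num
    try ring
  have cxxy4 : coeff 4 (x*x*y) = 0 := by
    rw [PowerSeries.coeff_mul, Finset.Nat.sum_antidiagonal_eq_sum_range_succ_mk]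
    simp only [Finset.sum_range_succ, Finset.sum_range_zero, Nat.reduceSub, cxx0, cxx1, cxx2, cxx3, cxx4, cy0, cy1, cy2, cy3, cy4]
    try norm_num
    try ring
  have cxxy5 : coeff 5 (x*x*y) = 0 := by
    rw [PowerSeries.coeff_mul, Finset.Nat.sum_antidiagonal_eq_sum_range_succ_mk]
    simp only [Finset.sum_range_succ, Finset.sum_range_zero, Nat.reduceSub, cxx0, cxx1, cxx2, cxx3, cxx4, cxx5, cy0, cy1, cy2, cy3, cy4, cy5]
    try norm_num
    try ring
  have cxxy6 : coeff 6 (x*x*y) = 0 := by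
    rw [PowerSeries.coeff_mul, Finset.Nat.sum_antidiagonal_eq_sum_range_succ_mk]
    simp only [Finset.sum_range_succ, Finset.sum_range_zero, Nat.reduceSub, cxx0, cxx1, cxx2, cxx3, cxx4, cxx5, cxx6, cy0, cy1, cy2, cy3, cy4, cy5, cy6]
    try norm_num
    try ring
  have cxxy7 : coeff 7 (x*x*y) = 0 := by
    rw [PowerSeries.coeff_mul, Finset.Nat.sum_antidiagonal_eq_sum_range_succ_mk]
    simp only [Finset.sum_range_succ, Finset.sum_range_zero, Nat.reduceSub, cxx0, cxx1, cxx2, cxx3, cxx4, cxx5, cxx6, cxx7, cy0, cy1, cy2, cy3, cy4, cy5, cy6, cy7]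
    try norm_num
    try ring
  have cxxy8 : coeff 8 (x*x*y) = 0 := by
    rw [PowerSeries.coeff_mul, Finset.Nat.sum_antidiagonal_eq_sum_range_succ_mk]
    simp only [Finset.sum_range_succ, Finset.sum_range_zero, Nat.reduceSub, cxx0, cxx1, cxx2, cxx3, cxx4, cxx5, cxx6, cxx7, cxx8, cy0, cy1, cy2, cy3, cy4, cy5, cy6, cy7, cy8]
    try norm_num
    try ring
  have cxxy9 : coeff 9 (x*x*y) = 0 := by
    rw [PowerSeries.coeff_mul, Finset.Nat.sum_antidiagonal_eq_sum_range_succ_mk]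
    simp only [Finset.sum_range_succ, Finset.sum_range_zero, Nat.reduceSub, cxx0, cxx1, cxx2, cxx3, cxx4, cxx5, cxx6, cxx7, cxx8, cxx9, cy0, cy1, cy2, cy3, cy4, cy5, cy6, cy7, cy8, cy9]
    try norm_num
    try ring
  have cxxy10 : coeff 10 (x*x*y) = 0 := by
    rw [PowerSeries.coeff_mul, Finset.Nat.sum_antidiagonal_eq_sum_range_succ_mk]
    simp only [Finset.sum_range_succ, Finset.sum_range_zero, Nat.reduceSub, cxx0, cxx1, cxx2, cxx3, cxx4, cxx5, cxx6, cxx7, cxx8, cxx9, cxx10, cy0, cy1, cy2, cy3, cy4, cy5, cy6, cy7, cy8, cy9, cy10]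
    try norm_num
    try ring
  have cxxy11 : coeff 11 (x*x*y) = 0 := by
    rw [PowerSeries.coeff_mul, Finset.Nat.sum_antidiagonal_eq_sum_range_succ_mk]
    simp only [Finset.sum_range_succ, Finset.sum_range_zero, Nat.reduceSub, cxx0, cxx1, cxx2, cxx3, cxx4, cxx5, cxx6, cxx7, cxx8, cxx9, cxx10, cxx11, cy0, cy1, cy2, cy3, cy4, cy5, cy6, cy7, cy8, cy9, cy10, cy11]
    try norm_num
    try ring
  have cxxy12 : coeff 12 (x*x*y) = 0 := by
    rw [PowerSeries.coeff_mul, Finset.Nat.sum_antidiagonal_eq_sum_range_succ_mk]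
    simp only [Finset.sum_range_succ, Finset.sum_range_zero, Nat.reduceSub, cxx0, cxx1, cxx2, cxx3, cxx4, cxx5, cxx6, cxx7, cxx8, cxx9, cxx10, cxx11, cxx12, cy0, cy1, cy2, cy3, cy4, cy5, cy6, cy7, cy8, cy9, cy10, cy11, cy12]
    try norm_num
    try ring
  have cxxy13 : coeff 13 (x*x*y) = 0 := by
    rw [PowerSeries.coeff_mul, Finset.Nat.sum_antidiagonal_eq_sum_range_succ_mk]
    simp only [Finset.sum_range_succ, Finset.sum_range_zero, Nat.reduceSub, cxx0, cxx1, cxx2, cxx3, cxx4, cxx5, cxx6, cxx7, cxx8, cxx9, cxx10, cxx11, cxx12, cxx13, cy0, cy1, cy2, cy3, cy4, cy5, cy6, cy7, cy8, cy9, cy10, cy11, cy12, cy13]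
    try norm_num
    try ring
  have cxxy14 : coeff 14 (x*x*y) = 1 := by
    rw [PowerSeries.coeff_mul, Finset.Nat.sum_antidiagonal_eq_sum_range_succ_mk]
    simp only [Finset.sum_range_succ, Finset.sum_range_zero, Nat.reduceSub, cxx0, cxx1, cxx2, cxx3, cxx4, cxx5, cxx6, cxx7, cxx8, cxx9, cxx10, cxx11, cxx12, cxx13, cxx14, cy0, cy1, cy2, cy3, cy4, cy5, cy6, cy7, cy8, cy9, cy10, cy11, cy12, cy13, cy14]
    try norm_num
    try ring
  have cxxy15 : coeff 15 (x*x*y) = 2*a₅+b₇ := by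
    rw [PowerSeries.coeff_mul, Finset.Nat.sum_antidiagonal_eq_sum_range_succ_mk]
    simp only [Finset.sum_range_succ, Finset.sum_range_zero, Nat.reduceSub, cxx0, cxx1, cxx2, cxx3, cxx4, cxx5, cxx6, cxx7, cxx8, cxx9, cxx10, cxx11, cxx12, cxx13, cxx14, cxx15, cy0, cy1, cy2, cy3, cy4, cy5, cy6, cy7, cy8, cy9, cy10, cy11, cy12, cy13, cy14, cy15]
    try norm_num
    try ring
  have hordx : order x = (4:ℕ) := PowerSeries.order_eq_nat.2
    ⟨by rw [cx4]; exact one_ne_zero, fun i hi => by interval_cases i <;> assumption⟩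
  have hordy : order y = (6:ℕ) := PowerSeries.order_eq_nat.2
    ⟨by rw [cy6]; exact one_ne_zero, fun i hi => by interval_cases i <;> assumption⟩
  have hordz : order z = (13:ℕ) := PowerSeries.order_eq_nat.2
    ⟨by rw [cz13]; exact one_ne_zero, fun i hi => by interval_cases i <;> assumption⟩
  have hdvd16 : ∀ f : PowerSeries ℂ, ((16:ℕ):ℕ∞) ≤ order f → (X:ℂ⟦X⟧)^16 ∣ f := by
    intro f hf
    rw [PowerSeries.X_pow_dvd_iff]
    intro m hm
    exact PowerSeries.coeff_of_lt_order m (lt_of_lt_of_le (by exact_mod_cast hm) hf)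
  have j1 : (X:ℂ⟦X⟧)^16 ∣ x*x*x*x := hdvd16 _ (by
    simp only [PowerSeries.order_mul, hordx, hordy, hordz]
    exact_mod_cast (by norm_num : (16:ℕ) ≤ 16))
  have j2 : (X:ℂ⟦X⟧)^16 ∣ x*y*y := hdvd16 _ (by
    simp only [PowerSeries.order_mul, hordx, hordy, hordz]
    exact_mod_cast (by norm_num : (16:ℕ) ≤ 16))
  have j3 : (X:ℂ⟦X⟧)^16 ∣ x*z := hdvd16 _ (by
    simp only [PowerSeries.order_mul, hordx, hordy, hordz]
    exact_mod_cast (by norm_num : (16:ℕ) ≤ 17))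
  have j4 : (X:ℂ⟦X⟧)^16 ∣ x*x*x*y := hdvd16 _ (by
    simp only [PowerSeries.order_mul, hordx, hordy, hordz]
    exact_mod_cast (by norm_num : (16:ℕ) ≤ 18))
  have j5 : (X:ℂ⟦X⟧)^16 ∣ y*y*y := hdvd16 _ (by
    simp only [PowerSeries.order_mul, hordx, hordy, hordz]
    exact_mod_cast (by norm_num : (16:ℕ) ≤ 18))
  have j6 : (X:ℂ⟦X⟧)^16 ∣ y*z := hdvd16 _ (by
    simp only [PowerSeries.order_mul, hordx, hordy, hordz]
    exact_mod_cast (by norm_num : (16:ℕ) ≤ 19))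
  have j7 : (X:ℂ⟦X⟧)^16 ∣ x*x*y*y := hdvd16 _ (by
    simp only [PowerSeries.order_mul, hordx, hordy, hordz]
    exact_mod_cast (by norm_num : (16:ℕ) ≤ 20))
  have j8 : (X:ℂ⟦X⟧)^16 ∣ x*x*z := hdvd16 _ (by
    simp only [PowerSeries.order_mul, hordx, hordy, hordz]
    exact_mod_cast (by norm_num : (16:ℕ) ≤ 21))
  have j9 : (X:ℂ⟦X⟧)^16 ∣ x*y*z := hdvd16 _ (by
    simp only [PowerSeries.order_mul, hordx, hordy, hordz]
    exact_mod_cast (by norm_num : (16:ℕ) ≤ 23))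
  have j10 : (X:ℂ⟦X⟧)^16 ∣ x*x*x*z := hdvd16 _ (by
    simp only [PowerSeries.order_mul, hordx, hordy, hordz]
    exact_mod_cast (by norm_num : (16:ℕ) ≤ 25))
  have j11 : (X:ℂ⟦X⟧)^16 ∣ y*y*z := hdvd16 _ (by
    simp only [PowerSeries.order_mul, hordx, hordy, hordz]
    exact_mod_cast (by norm_num : (16:ℕ) ≤ 25))
  have j12 : (X:ℂ⟦X⟧)^16 ∣ z*z := hdvd16 _ (by
    simp only [PowerSeries.order_mul, hordx, hordy, hordz]
    exact_mod_cast (by norm_num : (16:ℕ) ≤ 26))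
  have j13 : (X:ℂ⟦X⟧)^16 ∣ x*x*y*z := hdvd16 _ (by
    simp only [PowerSeries.order_mul, hordx, hordy, hordz]
    exact_mod_cast (by norm_num : (16:ℕ) ≤ 27))
  have key : ∀ p : MvPolynomial (Fin 3) ℂ, ∃ c₀ c₄ c₆ c₈ c₁₀ α β γ δ : ℂ,
      (X:ℂ⟦X⟧)^16 ∣ (MvPolynomial.aeval ![x,y,z] p - (C c₀ + C c₄ * x + C c₆ * y + C c₈ * (x*x) + C c₁₀ * (x*y) + C α * (x*x*x) + C β * (y*y) + C γ * z + C δ * (x*x*y))) := by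
    intro p
    induction p using MvPolynomial.induction_on with
    | C a =>
        refine ⟨a,0,0,0,0,0,0,0,0, ?_⟩
        have h1 : MvPolynomial.aeval ![x,y,z] (MvPolynomial.C a) = C a := by
          simp [PowerSeries.algebraMap_apply]
        rw [h1]
        have h2 : C a - (C a + C 0 * x + C 0 * y + C 0 * (x*x) + C 0 * (x*y) + C 0 * (x*x*x) + C 0 * (y*y) + C 0 * z + C 0 * (x*x*y)) = 0 := by
          simp only [map_zero]; ring
        rw [h2]
        exact dvd_zero _
    | add p q hp hq =>
        obtain ⟨p0,p4,p6,p8,p10,pa,pb,pg,pd,hp⟩ := hp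
        obtain ⟨q0,q4,q6,q8,q10,qa,qb,qg,qd,hq⟩ := hq
        refine ⟨p0+q0,p4+q4,p6+q6,p8+q8,p10+q10,pa+qa,pb+qb,pg+qg,pd+qd, ?_⟩
        have h2 : MvPolynomial.aeval ![x,y,z] (p+q) - (C (p0+q0) + C (p4+q4) * x + C (p6+q6) * y + C (p8+q8) * (x*x) + C (p10+q10) * (x*y) + C (pa+qa) * (x*x*x) + C (pb+qb) * (y*y) + C (pg+qg) * z + C (pd+qd) * (x*x*y))
            = (MvPolynomial.aeval ![x,y,z] p - (C p0 + C p4 * x + C p6 * y + C p8 * (x*x) + C p10 * (x*y) + C pa * (x*x*x) + C pb * (y*y) + C pg * z + C pd * (x*x*y))) + (MvPolynomial.aeval ![x,y,z] q - (C q0 + C q4 * x + C q6 * y + C q8 * (x*x) + C q10 * (x*y) + C qa * (x*x*x) + C qb * (y*y) + C qg * z + C qd * (x*x*y))) := by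
          simp only [map_add]; ring
        rw [h2]
        exact dvd_add hp hq
    | mul_X p i hp =>
        obtain ⟨p0,p4,p6,p8,p10,pa,pb,pg,pd,hp⟩ := hp
        obtain ⟨d, hd⟩ := hp
        rw [sub_eq_iff_eq_add] at hd
        fin_cases i
        · refine ⟨0,p0,0,p4,p6,p8,0,0,p10, ?_⟩
          rw [map_mul, MvPolynomial.aeval_X]
          show (X:ℂ⟦X⟧)^16 ∣ MvPolynomial.aeval ![x,y,z] p * x - (C 0 + C p0 * x + C 0 * y + C p4 * (x*x) + C p6 * (x*y) + C p8 * (x*x*x) + C 0 * (y*y) + C 0 * z + C p10 * (x*x*y))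
          have h2 : MvPolynomial.aeval ![x,y,z] p * x - (C 0 + C p0 * x + C 0 * y + C p4 * (x*x) + C p6 * (x*y) + C p8 * (x*x*x) + C 0 * (y*y) + C 0 * z + C p10 * (x*x*y))
              = (X:ℂ⟦X⟧)^16*(d*x) + C pa * (x*x*x*x) + C pb * (x*y*y) + C pg * (x*z) + C pd * (x*x*x*y) := by
            rw [hd]; simp only [map_zero]; ring
          rw [h2]
          exact dvd_add (dvd_add (dvd_add (dvd_add (dvd_mul_right _ _) (j1.mul_left _)) (j2.mul_left _)) (j3.mul_left _)) (j4.mul_left _)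
        · refine ⟨0,0,p0,0,p4,0,p6,0,p8, ?_⟩
          rw [map_mul, MvPolynomial.aeval_X]
          show (X:ℂ⟦X⟧)^16 ∣ MvPolynomial.aeval ![x,y,z] p * y - (C 0 + C 0 * x + C p0 * y + C 0 * (x*x) + C p4 * (x*y) + C 0 * (x*x*x) + C p6 * (y*y) + C 0 * z + C p8 * (x*x*y))
          have h2 : MvPolynomial.aeval ![x,y,z] p * y - (C 0 + C 0 * x + C p0 * y + C 0 * (x*x) + C p4 * (x*y) + C 0 * (x*x*x) + C p6 * (y*y) + C 0 * z + C p8 * (x*x*y))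
              = (X:ℂ⟦X⟧)^16*(d*y) + C p10 * (x*y*y) + C pa * (x*x*x*y) + C pb * (y*y*y) + C pg * (y*z) + C pd * (x*x*y*y) := by
            rw [hd]; simp only [map_zero]; ring
          rw [h2]
          exact dvd_add (dvd_add (dvd_add (dvd_add (dvd_add (dvd_mul_right _ _) (j2.mul_left _)) (j4.mul_left _)) (j5.mul_left _)) (j6.mul_left _)) (j7.mul_left _)
        · refine ⟨0,0,0,0,0,0,0,p0,0, ?_⟩
          rw [map_mul, MvPolynomial.aeval_X]
          show (X:ℂ⟦X⟧)^16 ∣ MvPolynomial.aeval ![x,y,z] p * z - (C 0 + C 0 * x + C 0 * y + C 0 * (x*x) + C 0 * (x*y) + C 0 * (x*x*x) + C 0 * (y*y) + C p0 * z + C 0 * (x*x*y))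
          have h2 : MvPolynomial.aeval ![x,y,z] p * z - (C 0 + C 0 * x + C 0 * y + C 0 * (x*x) + C 0 * (x*y) + C 0 * (x*x*x) + C 0 * (y*y) + C p0 * z + C 0 * (x*x*y))
              = (X:ℂ⟦X⟧)^16*(d*z) + C p4 * (x*z) + C p6 * (y*z) + C p8 * (x*x*z) + C p10 * (x*y*z) + C pa * (x*x*x*z) + C pb * (y*y*z) + C pg * (z*z) + C pd * (x*x*y*z) := by
            rw [hd]; simp only [map_zero]; ring
          rw [h2]
          exact dvd_add (dvd_add (dvd_add (dvd_add (dvd_add (dvd_add (dvd_add (dvd_add (dvd_mul_right _ _) (j3.mul_left _)) (j6.mul_left _)) (j8.mul_left _)) (j9.mul_left _)) (j10.mul_left _)) (j11.mul_left _)) (j12.mul_left _)) (j13.mul_left _)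
  have memCoeff : ∀ f, f ∈ adjSet ![x,y,z] 16 → ∃ c₀ c₄ c₆ c₈ c₁₀ α β γ δ : ℂ,
      ∀ m : ℕ, m < 16 → coeff m f = coeff m (C c₀ + C c₄ * x + C c₆ * y + C c₈ * (x*x) + C c₁₀ * (x*y) + C α * (x*x*x) + C β * (y*y) + C γ * z + C δ * (x*x*y)) := by
    rintro f ⟨p, h, rfl⟩
    obtain ⟨c₀,c₄,c₆,c₈,c₁₀,α,β,γ,δ,hdvd⟩ := key p
    refine ⟨c₀,c₄,c₆,c₈,c₁₀,α,β,γ,δ, fun m hm => ?_⟩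
    have h2 : (X:ℂ⟦X⟧)^16 ∣ (MvPolynomial.aeval ![x,y,z] p + (X:ℂ⟦X⟧)^16*h - (C c₀ + C c₄ * x + C c₆ * y + C c₈ * (x*x) + C c₁₀ * (x*y) + C α * (x*x*x) + C β * (y*y) + C γ * z + C δ * (x*x*y))) := by
      have h4 := dvd_add hdvd (dvd_mul_right ((X:ℂ⟦X⟧)^16) h)
      convert h4 using 1
      ring
    have h3 := PowerSeries.X_pow_dvd_iff.1 h2 m hm
    rw [map_sub, sub_eq_zero] at h3
    exact h3
  have hmemΓ : ∀ n : ℕ, n ∈ AddSubmonoid.closure ({4,6,13} : Set ℕ) ↔ ∃ a b c : ℕ, n = 4*a+6*b+13*c := by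
    intro n
    constructor
    · intro hn
      induction hn using AddSubmonoid.closure_induction with
      | mem k hk =>
          simp only [Set.mem_insert_iff, Set.mem_singleton_iff] at hk
          rcases hk with rfl | rfl | rfl
          exacts [⟨1,0,0, by norm_num⟩, ⟨0,1,0, by norm_num⟩, ⟨0,0,1, by norm_num⟩]
      | zero => exact ⟨0,0,0, by norm_num⟩
      | add k l hk' hl' hk hl =>
          obtain ⟨a,b,c,rfl⟩ := hk
          obtain ⟨a',b',c',rfl⟩ := hl
          exact ⟨a+a', b+b', c+c', by ring⟩
    · rintro ⟨a,b,c,rfl⟩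
      have h4 : (4:ℕ) ∈ AddSubmonoid.closure ({4,6,13}:Set ℕ) := AddSubmonoid.subset_closure (by simp)
      have h6 : (6:ℕ) ∈ AddSubmonoid.closure ({4,6,13}:Set ℕ) := AddSubmonoid.subset_closure (by simp)
      have h13 : (13:ℕ) ∈ AddSubmonoid.closure ({4,6,13}:Set ℕ) := AddSubmonoid.subset_closure (by simp)
      have hsum := AddSubmonoid.add_mem _ (AddSubmonoid.add_mem _ (nsmul_mem h4 a) (nsmul_mem h6 b)) (nsmul_mem h13 c)
      simpa [nsmul_eq_mul, mul_comm] using hsum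
  have ho1 : HasOrder 1 0 := ⟨by simp, fun m hm => absurd hm (Nat.not_lt_zero m)⟩
  have hox : HasOrder (x) 4 :=
    ⟨by rw [cx4]; exact one_ne_zero, fun m hm => by interval_cases m <;> assumption⟩
  have hoy : HasOrder (y) 6 :=
    ⟨by rw [cy6]; exact one_ne_zero, fun m hm => by interval_cases m <;> assumption⟩
  have hoz : HasOrder (z) 13 :=
    ⟨by rw [cz13]; exact one_ne_zero, fun m hm => by interval_cases m <;> assumption⟩
  have hoxx : HasOrder (x*x) 8 :=
    ⟨by rw [cxx8]; exact one_ne_zero, fun m hm => by interval_cases m <;> assumption⟩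
  have hoxy : HasOrder (x*y) 10 :=
    ⟨by rw [cxy10]; exact one_ne_zero, fun m hm => by interval_cases m <;> assumption⟩
  have hoxxx : HasOrder (x*x*x) 12 :=
    ⟨by rw [cxxx12]; exact one_ne_zero, fun m hm => by interval_cases m <;> assumption⟩
  have hoxxy : HasOrder (x*x*y) 14 :=
    ⟨by rw [cxxy14]; exact one_ne_zero, fun m hm => by interval_cases m <;> assumption⟩
  have mem1 : (1:ℂ⟦X⟧) ∈ adjSet ![x,y,z] 16 := ⟨1, 0, by simp⟩
  have memx : x ∈ adjSet ![x,y,z] 16 := ⟨MvPolynomial.X 0, 0, by simp⟩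
  have memy : y ∈ adjSet ![x,y,z] 16 := ⟨MvPolynomial.X 1, 0, by simp⟩
  have memz : z ∈ adjSet ![x,y,z] 16 := ⟨MvPolynomial.X 2, 0, by simp⟩
  have memxx : x*x ∈ adjSet ![x,y,z] 16 := ⟨MvPolynomial.X 0 * MvPolynomial.X 0, 0, by simp⟩
  have memxy : x*y ∈ adjSet ![x,y,z] 16 := ⟨MvPolynomial.X 0 * MvPolynomial.X 1, 0, by simp⟩
  have memxxx : x*x*x ∈ adjSet ![x,y,z] 16 := ⟨MvPolynomial.X 0 * MvPolynomial.X 0 * MvPolynomial.X 0, 0, by simp⟩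
  have memxxy : x*x*y ∈ adjSet ![x,y,z] 16 := ⟨MvPolynomial.X 0 * MvPolynomial.X 0 * MvPolynomial.X 1, 0, by simp⟩
  have w0 : coeff 0 (x*x*x - y*y - C (3*a₅-2*b₇)*z - C (3*a₅^2-b₇^2)*(x*x*y)) = 0 := by
    rw [map_sub, map_sub, map_sub, coeff_C_mul, coeff_C_mul, cxxx0, cyy0, cz0, cxxy0]
    ring
  have w1 : coeff 1 (x*x*x - y*y - C (3*a₅-2*b₇)*z - C (3*a₅^2-b₇^2)*(x*x*y)) = 0 := by
    rw [map_sub, map_sub, map_sub, coeff_C_mul, coeff_C_mul, cxxx1, cyy1, cz1, cxxy1]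
    ring
  have w2 : coeff 2 (x*x*x - y*y - C (3*a₅-2*b₇)*z - C (3*a₅^2-b₇^2)*(x*x*y)) = 0 := by
    rw [map_sub, map_sub, map_sub, coeff_C_mul, coeff_C_mul, cxxx2, cyy2, cz2, cxxy2]
    ring
  have w3 : coeff 3 (x*x*x - y*y - C (3*a₅-2*b₇)*z - C (3*a₅^2-b₇^2)*(x*x*y)) = 0 := by
    rw [map_sub, map_sub, map_sub, coeff_C_mul, coeff_C_mul, cxxx3, cyy3, cz3, cxxy3]
    ring
  have w4 : coeff 4 (x*x*x - y*y - C (3*a₅-2*b₇)*z - C (3*a₅^2-b₇^2)*(x*x*y)) = 0 := by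
    rw [map_sub, map_sub, map_sub, coeff_C_mul, coeff_C_mul, cxxx4, cyy4, cz4, cxxy4]
    ring
  have w5 : coeff 5 (x*x*x - y*y - C (3*a₅-2*b₇)*z - C (3*a₅^2-b₇^2)*(x*x*y)) = 0 := by
    rw [map_sub, map_sub, map_sub, coeff_C_mul, coeff_C_mul, cxxx5, cyy5, cz5, cxxy5]
    ring
  have w6 : coeff 6 (x*x*x - y*y - C (3*a₅-2*b₇)*z - C (3*a₅^2-b₇^2)*(x*x*y)) = 0 := by
    rw [map_sub, map_sub, map_sub, coeff_C_mul, coeff_C_mul, cxxx6, cyy6, cz6, cxxy6]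
    ring
  have w7 : coeff 7 (x*x*x - y*y - C (3*a₅-2*b₇)*z - C (3*a₅^2-b₇^2)*(x*x*y)) = 0 := by
    rw [map_sub, map_sub, map_sub, coeff_C_mul, coeff_C_mul, cxxx7, cyy7, cz7, cxxy7]
    ring
  have w8 : coeff 8 (x*x*x - y*y - C (3*a₅-2*b₇)*z - C (3*a₅^2-b₇^2)*(x*x*y)) = 0 := by
    rw [map_sub, map_sub, map_sub, coeff_C_mul, coeff_C_mul, cxxx8, cyy8, cz8, cxxy8]
    ring
  have w9 : coeff 9 (x*x*x - y*y - C (3*a₅-2*b₇)*z - C (3*a₅^2-b₇^2)*(x*x*y)) = 0 := by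
    rw [map_sub, map_sub, map_sub, coeff_C_mul, coeff_C_mul, cxxx9, cyy9, cz9, cxxy9]
    ring
  have w10 : coeff 10 (x*x*x - y*y - C (3*a₅-2*b₇)*z - C (3*a₅^2-b₇^2)*(x*x*y)) = 0 := by
    rw [map_sub, map_sub, map_sub, coeff_C_mul, coeff_C_mul, cxxx10, cyy10, cz10, cxxy10]
    ring
  have w11 : coeff 11 (x*x*x - y*y - C (3*a₅-2*b₇)*z - C (3*a₅^2-b₇^2)*(x*x*y)) = 0 := by
    rw [map_sub, map_sub, map_sub, coeff_C_mul, coeff_C_mul, cxxx11, cyy11, cz11, cxxy11]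
    ring
  have w12 : coeff 12 (x*x*x - y*y - C (3*a₅-2*b₇)*z - C (3*a₅^2-b₇^2)*(x*x*y)) = 0 := by
    rw [map_sub, map_sub, map_sub, coeff_C_mul, coeff_C_mul, cxxx12, cyy12, cz12, cxxy12]
    ring
  have w13 : coeff 13 (x*x*x - y*y - C (3*a₅-2*b₇)*z - C (3*a₅^2-b₇^2)*(x*x*y)) = 0 := by
    rw [map_sub, map_sub, map_sub, coeff_C_mul, coeff_C_mul, cxxx13, cyy13, cz13, cxxy13]
    ring
  have w14 : coeff 14 (x*x*x - y*y - C (3*a₅-2*b₇)*z - C (3*a₅^2-b₇^2)*(x*x*y)) = 0 := by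
    rw [map_sub, map_sub, map_sub, coeff_C_mul, coeff_C_mul, cxxx14, cyy14, cz14, cxxy14]
    ring
  have w15 : coeff 15 (x*x*x - y*y - C (3*a₅-2*b₇)*z - C (3*a₅^2-b₇^2)*(x*x*y)) = -(5*a₅^3 + 3*a₅^2*b₇ - 2*a₅*b₇^2 + 3*a₅*c₁₅ - 3*a₇ - b₇^3 - 2*b₇*c₁₅ + 2*b₉) := by
    rw [map_sub, map_sub, map_sub, coeff_C_mul, coeff_C_mul, cxxx15, cyy15, cz15, cxxy15]
    ring
  constructor
  · intro hsgp
    by_contra hE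
    have hmem15 : (15:ℕ) ∈ sgp (adjSet ![x,y,z] 16) := by
      refine ⟨x*x*x - y*y - C (3*a₅-2*b₇)*z - C (3*a₅^2-b₇^2)*(x*x*y), ⟨MvPolynomial.X 0 * MvPolynomial.X 0 * MvPolynomial.X 0 - MvPolynomial.X 1 * MvPolynomial.X 1 - MvPolynomial.C (3*a₅-2*b₇) * MvPolynomial.X 2 - MvPolynomial.C (3*a₅^2-b₇^2) * (MvPolynomial.X 0 * MvPolynomial.X 0 * MvPolynomial.X 1), 0, ?_⟩, ?_, ?_⟩
      · simp [PowerSeries.algebraMap_apply]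
      · rw [w15]
        intro hcon
        exact hE (by linear_combination -hcon)
      · intro m hm
        interval_cases m <;> assumption
    rw [hsgp] at hmem15
    obtain ⟨a,b,c,h15⟩ := (hmemΓ 15).1 hmem15
    omega
  · intro hE
    ext n
    constructor
    · rintro ⟨f, hfS, hne, hlow⟩
      rcases Nat.lt_or_ge n 16 with h16 | h16
      · obtain ⟨c₀,c₄,c₆,c₈,c₁₀,α,β,γ,δ,hc⟩ := memCoeff f hfS
        have e0 : coeff 0 f = c₀ := by
          rw [hc 0 (by norm_num)]
          simp only [map_add, coeff_C, coeff_C_mul, cx0, cy0, cz0, cxx0, cxy0, cyy0, cxxx0, cxxy0]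
          norm_num
          try ring
        have e1 : coeff 1 f = 0 := by
          rw [hc 1 (by norm_num)]
          simp only [map_add, coeff_C, coeff_C_mul, cx1, cy1, cz1, cxx1, cxy1, cyy1, cxxx1, cxxy1]
          norm_num
          try ring
        have e2 : coeff 2 f = 0 := by
          rw [hc 2 (by norm_num)]
          simp only [map_add, coeff_C, coeff_C_mul, cx2, cy2, cz2, cxx2, cxy2, cyy2, cxxx2, cxxy2]
          norm_num
          try ring
        have e3 : coeff 3 f = 0 := by
          rw [hc 3 (by norm_num)]
          simp only [map_add, coeff_C, coeff_C_mul, cx3, cy3, cz3, cxx3, cxy3, cyy3, cxxx3, cxxy3]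
          norm_num
          try ring
        have e4 : coeff 4 f = c₄ := by
          rw [hc 4 (by norm_num)]
          simp only [map_add, coeff_C, coeff_C_mul, cx4, cy4, cz4, cxx4, cxy4, cyy4, cxxx4, cxxy4]
          norm_num
          try ring
        have e5 : coeff 5 f = c₄*a₅ := by
          rw [hc 5 (by norm_num)]
          simp only [map_add, coeff_C, coeff_C_mul, cx5, cy5, cz5, cxx5, cxy5, cyy5, cxxx5, cxxy5]
          norm_num
          try ring
        have e6 : coeff 6 f = c₆ := by
          rw [hc 6 (by norm_num)]
          simp only [map_add, coeff_C, coeff_C_mul, cx6, cy6, cz6, cxx6, cxy6, cyy6, cxxx6, cxxy6]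
          norm_num
          try ring
        have e7 : coeff 7 f = c₄*a₇+c₆*b₇ := by
          rw [hc 7 (by norm_num)]
          simp only [map_add, coeff_C, coeff_C_mul, cx7, cy7, cz7, cxx7, cxy7, cyy7, cxxx7, cxxy7]
          norm_num
          try ring
        have e8 : coeff 8 f = c₈ := by
          rw [hc 8 (by norm_num)]
          simp only [map_add, coeff_C, coeff_C_mul, cx8, cy8, cz8, cxx8, cxy8, cyy8, cxxx8, cxxy8]
          norm_num
          try ring
        have e9 : coeff 9 f = c₄*a₉+c₆*b₉+c₈*(2*a₅) := by
          rw [hc 9 (by norm_num)]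
          simp only [map_add, coeff_C, coeff_C_mul, cx9, cy9, cz9, cxx9, cxy9, cyy9, cxxx9, cxxy9]
          norm_num
          try ring
        have e10 : coeff 10 f = c₈*a₅^2+c₁₀ := by
          rw [hc 10 (by norm_num)]
          simp only [map_add, coeff_C, coeff_C_mul, cx10, cy10, cz10, cxx10, cxy10, cyy10, cxxx10, cxxy10]
          norm_num
          try ring
        have e11 : coeff 11 f = c₄*a₁₁+c₆*b₁₁+c₈*(2*a₇)+c₁₀*(a₅+b₇) := by
          rw [hc 11 (by norm_num)]
          simp only [map_add, coeff_C, coeff_C_mul, cx11, cy11, cz11, cxx11, cxy11, cyy11, cxxx11, cxxy11]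
          norm_num
          try ring
        have e12 : coeff 12 f = c₈*(2*a₅*a₇)+c₁₀*(a₅*b₇)+α+β := by
          rw [hc 12 (by norm_num)]
          simp only [map_add, coeff_C, coeff_C_mul, cx12, cy12, cz12, cxx12, cxy12, cyy12, cxxx12, cxxy12]
          norm_num
          try ring
        have e13 : coeff 13 f = c₈*(2*a₉)+c₁₀*(a₇+b₉)+α*(3*a₅)+β*(2*b₇)+γ := by
          rw [hc 13 (by norm_num)]
          simp only [map_add, coeff_C, coeff_C_mul, cx13, cy13, cz13, cxx13, cxy13, cyy13, cxxx13, cxxy13]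
          norm_num
          try ring
        have e14 : coeff 14 f = c₈*(2*a₅*a₉+a₇^2)+c₁₀*(a₅*b₉+a₇*b₇)+α*(3*a₅^2)+β*b₇^2+δ := by
          rw [hc 14 (by norm_num)]
          simp only [map_add, coeff_C, coeff_C_mul, cx14, cy14, cz14, cxx14, cxy14, cyy14, cxxx14, cxxy14]
          norm_num
          try ring
        have e15 : coeff 15 f = c₄*a₁₅+c₆*b₁₅+c₈*(2*a₁₁)+c₁₀*(a₉+b₁₁)+α*(a₅^3+3*a₇)+β*(2*b₉)+γ*c₁₅+δ*(2*a₅+b₇) := by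
          rw [hc 15 (by norm_num)]
          simp only [map_add, coeff_C, coeff_C_mul, cx15, cy15, cz15, cxx15, cxy15, cyy15, cxxx15, cxxy15]
          norm_num
          try ring
        interval_cases n
        · exact SetLike.mem_coe.2 ((hmemΓ 0).2 ⟨0,0,0, by norm_num⟩)
        · exact absurd e1 hne
        · exact absurd e2 hne
        · exact absurd e3 hne
        · exact SetLike.mem_coe.2 ((hmemΓ 4).2 ⟨1,0,0, by norm_num⟩)
        · have h4 : c₄ = 0 := by have h := hlow 4 (by omega); rw [e4] at h; exact h
          exact absurd (by rw [e5, h4]; ring) hne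
        · exact SetLike.mem_coe.2 ((hmemΓ 6).2 ⟨0,1,0, by norm_num⟩)
        · have h4 : c₄ = 0 := by have h := hlow 4 (by omega); rw [e4] at h; exact h
          have h6 : c₆ = 0 := by have h := hlow 6 (by omega); rw [e6] at h; exact h
          exact absurd (by rw [e7, h4, h6]; ring) hne
        · exact SetLike.mem_coe.2 ((hmemΓ 8).2 ⟨2,0,0, by norm_num⟩)
        · have h4 : c₄ = 0 := by have h := hlow 4 (by omega); rw [e4] at h; exact h
          have h6 : c₆ = 0 := by have h := hlow 6 (by omega); rw [e6] at h; exact h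
          have h8 : c₈ = 0 := by have h := hlow 8 (by omega); rw [e8] at h; exact h
          exact absurd (by rw [e9, h4, h6, h8]; ring) hne
        · exact SetLike.mem_coe.2 ((hmemΓ 10).2 ⟨1,1,0, by norm_num⟩)
        · have h4 : c₄ = 0 := by have h := hlow 4 (by omega); rw [e4] at h; exact h
          have h6 : c₆ = 0 := by have h := hlow 6 (by omega); rw [e6] at h; exact h
          have h8 : c₈ = 0 := by have h := hlow 8 (by omega); rw [e8] at h; exact h
          have h10 : c₁₀ = 0 := by have h := hlow 10 (by omega); rw [e10, h8] at h; linear_combination h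
          exact absurd (by rw [e11, h4, h6, h8, h10]; ring) hne
        · exact SetLike.mem_coe.2 ((hmemΓ 12).2 ⟨3,0,0, by norm_num⟩)
        · exact SetLike.mem_coe.2 ((hmemΓ 13).2 ⟨0,0,1, by norm_num⟩)
        · exact SetLike.mem_coe.2 ((hmemΓ 14).2 ⟨2,1,0, by norm_num⟩)
        · have h4 : c₄ = 0 := by have h := hlow 4 (by omega); rw [e4] at h; exact h
          have h6 : c₆ = 0 := by have h := hlow 6 (by omega); rw [e6] at h; exact h
          have h8 : c₈ = 0 := by have h := hlow 8 (by omega); rw [e8] at h; exact h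
          have h10 : c₁₀ = 0 := by have h := hlow 10 (by omega); rw [e10, h8] at h; linear_combination h
          have h12 : β = -α := by have h := hlow 12 (by omega); rw [e12, h8, h10] at h; linear_combination h
          have h13 : γ = -(3*a₅*α) - 2*b₇*β := by
            have h := hlow 13 (by omega); rw [e13, h8, h10] at h; linear_combination h
          have h14 : δ = -(3*a₅^2*α) - b₇^2*β := by
            have h := hlow 14 (by omega); rw [e14, h8, h10] at h; linear_combination h
          refine absurd ?_ hne
          rw [e15, h4, h6, h8, h10, h13, h14, h12]
          linear_combination (-α) * hE
      · exact SetLike.mem_coe.2 ((hmemΓ n).2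
          ⟨(n - 13*(n%2) - 6*((n - 13*(n%2))/2 % 2))/4, (n - 13*(n%2))/2 % 2, n%2, by omega⟩)
    · intro hn
      obtain ⟨a,b,c,hn2⟩ := (hmemΓ n).1 hn
      rcases Nat.lt_or_ge n 16 with h16 | h16
      · interval_cases n
        · exact ⟨1, mem1, ho1⟩
        · exact absurd hn2 (by omega)
        · exact absurd hn2 (by omega)
        · exact absurd hn2 (by omega)
        · exact ⟨x, memx, hox⟩
        · exact absurd hn2 (by omega)
        · exact ⟨y, memy, hoy⟩
        · exact absurd hn2 (by omega)
        · exact ⟨x*x, memxx, hoxx⟩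
        · exact absurd hn2 (by omega)
        · exact ⟨x*y, memxy, hoxy⟩
        · exact absurd hn2 (by omega)
        · exact ⟨x*x*x, memxxx, hoxxx⟩
        · exact ⟨z, memz, hoz⟩
        · exact ⟨x*x*y, memxxy, hoxxy⟩
        · exact absurd hn2 (by omega)
      · refine ⟨(X:ℂ⟦X⟧)^n, ⟨0, X^(n-16), ?_⟩, ?_, fun m hm => ?_⟩
        · rw [map_zero, zero_add, ← pow_add]
          congr 1
          omega
        · rw [coeff_X_pow, if_pos rfl]
          exact one_ne_zero
        · rw [coeff_X_pow, if_neg hm.ne]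
end
end

section
/- In the polynomial ring ℂ[t], let A be the ℂ-subalgebra generated by {t², t⁵} and let B be the ℂ-subalgebra generated by {t² + t³, t⁵}. Then A and B are not isomorphic as ℂ-algebras. -/
/-!
If `A = ℂ[t², t⁵]` embeds into `ℂ[t]`, the images `p, q` of `t², t⁵` satisfy `p⁵ = q²`, and since
`ℂ[t]` is integrally closed, `p = r²` and `q = r⁵` for some `r`. The embedding is then
`f ↦ f ∘ r`, so if its image were `B ∋ t² + t³` we would have `t² + t³ = g ∘ r` with `g ∈ A`.
Comparing degrees, `deg g ∈ {1, 3}`, but elements of `A` have no `t` or `t³` term.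
-/

open Polynomial

theorem exists_eq_sq_and_eq_pow_five_of_pow_five_eq_sq {R : Type*} [CommRing R] [IsDomain R]
    [IsIntegrallyClosed R] {p q : R} (h : p ^ 5 = q ^ 2) : ∃ r, p = r ^ 2 ∧ q = r ^ 5 := by
  rcases eq_or_ne p 0 with rfl | hp
  · exact ⟨0, by simp, by simpa using h.symm⟩
  set K := FractionRing R
  have hinj : Function.Injective (algebraMap R K) := IsFractionRing.injective R K
  have hp' : algebraMap R K p ≠ 0 := (map_ne_zero_iff _ hinj).mpr hp
  set ρ : K := algebraMap R K q / algebraMap R K p ^ 2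
  have hρ2 : ρ ^ 2 = algebraMap R K p := by
    have h' : algebraMap R K q ^ 2 = algebraMap R K p ^ 5 := by simp only [← map_pow, h]
    rw [div_pow, div_eq_iff (by positivity), h']
    ring
  have hρ5 : ρ ^ 5 = algebraMap R K q := by
    rw [show ρ ^ 5 = (ρ ^ 2) ^ 2 * ρ by ring, hρ2, mul_div_cancel₀ _ (pow_ne_zero _ hp')]
  have hint : IsIntegral R ρ :=
    ⟨X ^ 2 - C p, monic_X_pow_sub_C _ two_ne_zero, by simp [hρ2]⟩
  obtain ⟨r, hr⟩ := IsIntegrallyClosed.isIntegral_iff.mp hint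
  exact ⟨r, hinj (by rw [map_pow, hr, hρ2]), hinj (by rw [map_pow, hr, hρ5])⟩

theorem coeff_one_eq_zero_and_coeff_three_eq_zero_of_mem_adjoin {R : Type*} [CommSemiring R]
    {g : R[X]} (hg : g ∈ Algebra.adjoin R ({X ^ 2, X ^ 5} : Set R[X])) :
    g.coeff 1 = 0 ∧ g.coeff 3 = 0 := by
  induction hg using Algebra.adjoin_induction with
  | mem x hx => rcases hx with rfl | rfl <;> simp [coeff_X_pow]
  | algebraMap c => simp [Polynomial.algebraMap_eq]
  | add x y _ _ hx hy => simp [hx.1, hy.1, hx.2, hy.2]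
  | mul x y _ _ hx hy =>
    simp only [coeff_mul, Finset.Nat.sum_antidiagonal_eq_sum_range_succ_mk, Finset.sum_range_succ,
      Finset.sum_range_zero]
    simp [hx.1, hy.1, hx.2, hy.2]

theorem comp_ne_X_sq_add_X_pow_three_of_mem_adjoin {R : Type*} [CommRing R] [IsDomain R]
    {g : R[X]} (hg : g ∈ Algebra.adjoin R ({X ^ 2, X ^ 5} : Set R[X])) (r : R[X]) :
    g.comp r ≠ X ^ 2 + X ^ 3 := by
  intro hcomp
  have hdeg : g.natDegree * r.natDegree = 3 := by
    rw [← natDegree_comp, hcomp]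
    compute_degree!
  have hg0 : g ≠ 0 := by
    rintro rfl
    simpa using congrArg (coeff · 3) hcomp
  have hlc : g.coeff g.natDegree ≠ 0 := leadingCoeff_ne_zero.mpr hg0
  obtain ⟨hc1, hc3⟩ := coeff_one_eq_zero_and_coeff_three_eq_zero_of_mem_adjoin hg
  rcases Nat.prime_three.eq_one_or_self_of_dvd _ (Dvd.intro _ hdeg) with h | h <;>
    rw [h] at hlc
  exacts [hlc hc1, hlc hc3]

/-- in `ℂ[t]`, the `ℂ`-subalgebras generated by `{t², t⁵}` and by
`{t² + t³, t⁵}` are not isomorphic as `ℂ`-algebras. -/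
theorem stmt15 :
    IsEmpty
      ((Algebra.adjoin ℂ ({Polynomial.X ^ 2, Polynomial.X ^ 5} : Set (Polynomial ℂ))) ≃ₐ[ℂ]
        (Algebra.adjoin ℂ
          ({Polynomial.X ^ 2 + Polynomial.X ^ 3, Polynomial.X ^ 5} : Set (Polynomial ℂ)))) := by
  refine ⟨fun e => ?_⟩
  set A := Algebra.adjoin ℂ ({X ^ 2, X ^ 5} : Set ℂ[X])
  set B := Algebra.adjoin ℂ ({X ^ 2 + X ^ 3, X ^ 5} : Set ℂ[X])
  let φ : A →ₐ[ℂ] ℂ[X] := B.val.comp e.toAlgHom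
  have h2 : X ^ 2 ∈ A := Algebra.subset_adjoin (Set.mem_insert _ _)
  have h5 : X ^ 5 ∈ A := Algebra.subset_adjoin (Set.mem_insert_of_mem _ rfl)
  obtain ⟨r, hr2, hr5⟩ :=
    exists_eq_sq_and_eq_pow_five_of_pow_five_eq_sq (p := φ ⟨_, h2⟩) (q := φ ⟨_, h5⟩) <| by
      rw [← map_pow, ← map_pow]
      exact congrArg φ (Subtype.ext (by simp only [SubmonoidClass.coe_pow]; ring))
  have hφ : φ = (aeval r).comp A.val := by
    refine AlgHom.adjoin_ext ?_
    rintro x (rfl | rfl) <;> simp [hr2, hr5]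
  have hu : X ^ 2 + X ^ 3 ∈ B := Algebra.subset_adjoin (Set.mem_insert _ _)
  refine comp_ne_X_sq_add_X_pow_three_of_mem_adjoin (e.symm ⟨_, hu⟩).2 r ?_
  rw [comp_eq_aeval]
  simpa [φ] using (DFunLike.congr_fun hφ (e.symm ⟨_, hu⟩)).symm
end

section
/- In ℂ[[t]], let A := ⟨t², t⁵⟩ + t⁴·ℂ[[t]] and B := ⟨t² + t³, t⁵⟩ + t⁴·ℂ[[t]]. Then there exists a ℂ-algebra automorphism ρ of ℂ[[t]] with ρ(B) = A; in particular A and B are isomorphic as ℂ-algebras. Moreover A = {f ∈ ℂ[[t]] : the coefficients of t¹ and t³ in f are zero}. -/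
noncomputable section

namespace Stmt16Aux

open PowerSeries Finset

/-! ### A substitution operation on power series -/

/-- Substitution of `φ` (with zero constant term) into `f`. -/
def subst (φ f : PowerSeries ℂ) : PowerSeries ℂ :=
  PowerSeries.mk fun n => PowerSeries.coeff n (Polynomial.aeval φ (trunc (n+1) f))

variable {φ ψ : PowerSeries ℂ}

lemma coeff_pow_eq_zero (hφ : constantCoeff φ = 0) {n d : ℕ} (h : n < d) :
    coeff n (φ ^ d) = 0 := by
  have : (X : PowerSeries ℂ) ^ d ∣ φ ^ d := pow_dvd_pow_of_dvd (X_dvd_iff.2 hφ) d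
  exact X_pow_dvd_iff.1 this n h

lemma coeff_aeval (hφ : constantCoeff φ = 0) (p : Polynomial ℂ) {n N : ℕ}
    (hn : n < N) (hd : p.natDegree < N) :
    coeff n (Polynomial.aeval φ p) =
      ∑ d ∈ range N, p.coeff d * coeff n (φ ^ d) := by
  rw [Polynomial.aeval_eq_sum_range' hd, map_sum]
  exact Finset.sum_congr rfl fun i _ => by rw [map_smul, smul_eq_mul]

lemma coeff_aeval_congr (hφ : constantCoeff φ = 0) {p q : Polynomial ℂ} {n : ℕ}
    (h : ∀ d ≤ n, p.coeff d = q.coeff d) :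
    coeff n (Polynomial.aeval φ p) = coeff n (Polynomial.aeval φ q) := by
  set N := max (n + 1) (max (p.natDegree + 1) (q.natDegree + 1)) with hN
  rw [coeff_aeval hφ p (lt_of_lt_of_le (Nat.lt_succ_self n) (le_max_left _ _))
      (lt_of_lt_of_le (Nat.lt_succ_self _) (le_trans (le_max_left _ _) (le_max_right _ _))),
    coeff_aeval hφ q (lt_of_lt_of_le (Nat.lt_succ_self n) (le_max_left _ _))
      (lt_of_lt_of_le (Nat.lt_succ_self _) (le_trans (le_max_right _ _) (le_max_right _ _)))]
  refine Finset.sum_congr rfl fun d _ => ?_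
  by_cases hd : d ≤ n
  · rw [h d hd]
  · rw [coeff_pow_eq_zero hφ (not_le.mp hd), mul_zero, mul_zero]

lemma coeff_subst_eq (hφ : constantCoeff φ = 0) (f : PowerSeries ℂ) {n N : ℕ} (hn : n < N) :
    coeff n (subst φ f) = coeff n (Polynomial.aeval φ (trunc N f)) := by
  rw [subst, coeff_mk]
  refine coeff_aeval_congr hφ fun d hd => ?_
  rw [PowerSeries.coeff_trunc, PowerSeries.coeff_trunc, if_pos (Nat.lt_succ_of_le hd),
    if_pos (lt_of_le_of_lt hd hn)]

lemma coeff_subst (hφ : constantCoeff φ = 0) (f : PowerSeries ℂ) (n : ℕ) :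
    coeff n (subst φ f) =
      ∑ d ∈ range (n + 1), coeff d f * coeff n (φ ^ d) := by
  rw [subst, coeff_mk, coeff_aeval hφ _ (Nat.lt_succ_self n) (natDegree_trunc_lt f n)]
  refine Finset.sum_congr rfl fun d hd => ?_
  rw [PowerSeries.coeff_trunc, if_pos (mem_range.mp hd)]

lemma subst_add (f g : PowerSeries ℂ) : subst φ (f + g) = subst φ f + subst φ g := by
  ext n
  simp [subst, coeff_mk, map_add]

lemma subst_zero : subst φ 0 = 0 := by
  ext n; simp [subst, coeff_mk, map_zero]

lemma subst_C (a : ℂ) : subst φ (C a) = C a := by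
  ext n
  rw [subst, coeff_mk, trunc_C, Polynomial.aeval_C]
  rfl

lemma subst_one : subst φ (1 : PowerSeries ℂ) = 1 := by
  have := subst_C (φ := φ) 1
  simpa using this

lemma subst_mul (hφ : constantCoeff φ = 0) (f g : PowerSeries ℂ) :
    subst φ (f * g) = subst φ f * subst φ g := by
  ext n
  have h1 : coeff n (subst φ (f * g)) =
      coeff n (Polynomial.aeval φ (trunc (n+1) f * trunc (n+1) g)) := by
    rw [coeff_subst_eq hφ _ (Nat.lt_succ_self n)]
    refine coeff_aeval_congr hφ fun d hd => ?_
    have := PowerSeries.trunc_trunc_mul_trunc (n := n+1) f g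
    calc (trunc (n+1) (f*g)).coeff d
        = (trunc (n+1) ((trunc (n+1) f : PowerSeries ℂ) * (trunc (n+1) g : PowerSeries ℂ))).coeff d := by
          rw [this]
      _ = coeff d ((trunc (n+1) f : PowerSeries ℂ) * (trunc (n+1) g : PowerSeries ℂ)) := by
          rw [PowerSeries.coeff_trunc, if_pos (Nat.lt_succ_of_le hd)]
      _ = (trunc (n+1) f * trunc (n+1) g).coeff d := by
          rw [← Polynomial.coeff_coe, Polynomial.coe_mul]
  rw [h1, map_mul, PowerSeries.coeff_mul, PowerSeries.coeff_mul]
  refine Finset.sum_congr rfl fun ij hij => ?_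
  obtain ⟨hi, hj⟩ : ij.1 ≤ n ∧ ij.2 ≤ n := by
    have := Finset.HasAntidiagonal.mem_antidiagonal.mp hij
    omega
  rw [coeff_subst_eq hφ f (Nat.lt_succ_of_le hi), coeff_subst_eq hφ g (Nat.lt_succ_of_le hj)]

lemma subst_pow (hφ : constantCoeff φ = 0) (f : PowerSeries ℂ) (k : ℕ) :
    subst φ (f ^ k) = (subst φ f) ^ k := by
  induction k with
  | zero => simpa using subst_one
  | succ k ih => rw [pow_succ, pow_succ, subst_mul hφ, ih]

lemma subst_X (hφ : constantCoeff φ = 0) : subst φ (X : PowerSeries ℂ) = φ := by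
  ext n
  rw [coeff_subst hφ]
  match n with
  | 0 => simp [coeff_X, hφ]
  | (n+1) =>
    rw [Finset.sum_eq_single 1]
    · simp [coeff_X]
    · intro d _ hd
      simp [coeff_X, hd]
    · intro h
      exact absurd (Finset.mem_range.mpr (by omega)) h

lemma subst_X_left (f : PowerSeries ℂ) : subst (X : PowerSeries ℂ) f = f := by
  ext n
  rw [coeff_subst PowerSeries.constantCoeff_X f n, Finset.sum_eq_single n]
  · simp [coeff_X_pow]
  · intro d _ hd
    simp [coeff_X_pow, Ne.symm hd]
  · intro h
    exact absurd (Finset.mem_range.mpr (Nat.lt_succ_self n)) h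

lemma constantCoeff_subst (hφ : constantCoeff φ = 0) (f : PowerSeries ℂ) :
    constantCoeff (subst φ f) = constantCoeff f := by
  rw [← coeff_zero_eq_constantCoeff_apply, coeff_subst hφ]
  simp [coeff_zero_eq_constantCoeff_apply]

lemma subst_comp (hφ : constantCoeff φ = 0) (hψ : constantCoeff ψ = 0)
    (f : PowerSeries ℂ) : subst φ (subst ψ f) = subst (subst φ ψ) f := by
  have hφψ : constantCoeff (subst φ ψ) = 0 := by rw [constantCoeff_subst hφ, hψ]
  ext n
  rw [coeff_subst hφ, coeff_subst hφψ]
  have hL : ∀ d ∈ range (n+1), coeff d (subst ψ f) * coeff n (φ ^ d)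
      = ∑ e ∈ range (n+1), coeff e f * coeff d (ψ ^ e) * coeff n (φ ^ d) := by
    intro d hd
    rw [coeff_subst hψ, Finset.sum_mul]
    refine Finset.sum_subset (Finset.range_subset_range.mpr (by
        have := Finset.mem_range.mp hd; omega)) fun e _ he => ?_
    have hde : d < e := by
      have h1 := Finset.mem_range.mp hd
      by_contra hc
      exact he (Finset.mem_range.mpr (by omega))
    rw [coeff_pow_eq_zero hψ hde, mul_zero, zero_mul]
  calc ∑ d ∈ range (n+1), coeff d (subst ψ f) * coeff n (φ ^ d)
      = ∑ d ∈ range (n+1), ∑ e ∈ range (n+1),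
          coeff e f * coeff d (ψ ^ e) * coeff n (φ ^ d) :=
        Finset.sum_congr rfl hL
    _ = ∑ e ∈ range (n+1), ∑ d ∈ range (n+1),
          coeff e f * coeff d (ψ ^ e) * coeff n (φ ^ d) := Finset.sum_comm
    _ = ∑ e ∈ range (n+1), coeff e f * coeff n (subst φ ψ ^ e) := by
        refine Finset.sum_congr rfl fun e _ => ?_
        rw [← subst_pow hφ, coeff_subst hφ, Finset.mul_sum]
        exact Finset.sum_congr rfl fun d _ => mul_assoc _ _ _

/-- `subst` as an algebra homomorphism. -/
def substAlgHom {φ : PowerSeries ℂ} (hφ : constantCoeff φ = 0) :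
    PowerSeries ℂ →ₐ[ℂ] PowerSeries ℂ where
  toFun := subst φ
  map_one' := subst_one
  map_mul' := subst_mul hφ
  map_zero' := subst_zero
  map_add' := subst_add
  commutes' a := by
    show subst φ (algebraMap ℂ (PowerSeries ℂ) a) = algebraMap ℂ (PowerSeries ℂ) a
    rw [PowerSeries.algebraMap_apply]
    simp [subst_C]

@[simp] lemma substAlgHom_apply {φ : PowerSeries ℂ} (hφ : constantCoeff φ = 0)
    (f : PowerSeries ℂ) : substAlgHom hφ f = subst φ f := rfl

/-! ### The concrete automorphism -/

lemma geom (c : ℂ) :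
    (1 + PowerSeries.C c * X) * PowerSeries.mk (fun n => (-c) ^ n) = 1 := by
  ext n
  rw [add_mul, one_mul, map_add, mul_assoc, coeff_C_mul]
  cases n with
  | zero =>
    simp
  | succ n =>
    rw [coeff_succ_X_mul, coeff_mk, coeff_mk, coeff_one, if_neg (Nat.succ_ne_zero n), pow_succ']
    ring

def u : PowerSeries ℂ := PowerSeries.mk fun n => (-(2:ℂ)⁻¹) ^ n
def v : PowerSeries ℂ := PowerSeries.mk fun n => ((2:ℂ)⁻¹) ^ n

lemma hu : (1 + PowerSeries.C 2⁻¹ * X) * u = 1 := geom 2⁻¹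

lemma hv : (1 - PowerSeries.C 2⁻¹ * X) * v = 1 := by
  have h := geom (-(2:ℂ)⁻¹)
  rw [map_neg] at h
  simp only [neg_neg] at h
  rw [sub_eq_add_neg, ← neg_mul]
  exact h

def φ₀ : PowerSeries ℂ := X * u
def ψ₀ : PowerSeries ℂ := X * v

lemma hφ0 : constantCoeff φ₀ = 0 := by simp [φ₀]
lemma hψ0 : constantCoeff ψ₀ = 0 := by simp [ψ₀]

lemma subst_phi_psi : subst φ₀ ψ₀ = X := by
  have h1 := congrArg (substAlgHom hφ0) hv
  simp only [map_mul, map_sub, map_one, substAlgHom_apply, subst_C, subst_X hφ0] at h1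
  have h3 : (1 + PowerSeries.C 2⁻¹ * X) * (1 - PowerSeries.C 2⁻¹ * φ₀) = 1 := by
    rw [φ₀]
    linear_combination (-(PowerSeries.C 2⁻¹ * X)) * hu
  have h4 : subst φ₀ v = 1 + PowerSeries.C 2⁻¹ * X := by
    linear_combination (1 + PowerSeries.C 2⁻¹ * X) * h1 - subst φ₀ v * h3
  show subst φ₀ (X * v) = X
  rw [subst_mul hφ0, subst_X hφ0, h4, φ₀]
  linear_combination X * hu

lemma subst_psi_phi : subst ψ₀ φ₀ = X := by
  have h1 := congrArg (substAlgHom hψ0) hu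
  simp only [map_mul, map_add, map_one, substAlgHom_apply, subst_C, subst_X hψ0] at h1
  have h3 : (1 - PowerSeries.C 2⁻¹ * X) * (1 + PowerSeries.C 2⁻¹ * ψ₀) = 1 := by
    rw [ψ₀]
    linear_combination (PowerSeries.C 2⁻¹ * X) * hv
  have h4 : subst ψ₀ u = 1 - PowerSeries.C 2⁻¹ * X := by
    linear_combination (1 - PowerSeries.C 2⁻¹ * X) * h1 - subst ψ₀ u * h3
  show subst ψ₀ (X * u) = X
  rw [subst_mul hψ0, subst_X hψ0, h4, ψ₀]
  linear_combination X * hv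

/-- The automorphism `ρ`. -/
def rho : PowerSeries ℂ ≃ₐ[ℂ] PowerSeries ℂ :=
  AlgEquiv.ofAlgHom (substAlgHom hφ0) (substAlgHom hψ0)
    (AlgHom.ext fun f => by
      simp only [AlgHom.coe_comp, Function.comp_apply, substAlgHom_apply, AlgHom.coe_id, id_eq]
      rw [subst_comp hφ0 hψ0, subst_phi_psi, subst_X_left])
    (AlgHom.ext fun f => by
      simp only [AlgHom.coe_comp, Function.comp_apply, substAlgHom_apply, AlgHom.coe_id, id_eq]
      rw [subst_comp hψ0 hφ0, subst_psi_phi, subst_X_left])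

lemma rho_apply (f : PowerSeries ℂ) : rho f = subst φ₀ f := rfl

/-! ### Low-order coefficient computations -/

lemma coeff_mul_expand (f g : PowerSeries ℂ) (n : ℕ) :
    coeff n (f * g) = ∑ k ∈ range (n + 1), coeff k f * coeff (n - k) g := by
  rw [PowerSeries.coeff_mul, Finset.Nat.sum_antidiagonal_eq_sum_range_succ_mk]

lemma coeff_phi (n : ℕ) : coeff (n + 1) φ₀ = (-(2:ℂ)⁻¹) ^ n := by
  rw [φ₀, coeff_succ_X_mul, u, coeff_mk]

lemma coeff_u (n : ℕ) : coeff n u = (-(2:ℂ)⁻¹) ^ n := by rw [u, coeff_mk]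

lemma coeff2_phi2 : coeff 2 (φ₀ ^ 2) = 1 := by
  rw [φ₀, mul_pow]
  have := PowerSeries.coeff_X_pow_mul (u ^ 2) 2 0
  rw [zero_add] at this
  rw [this, coeff_zero_eq_constantCoeff_apply, map_pow]
  simp [u, PowerSeries.constantCoeff_mk]

lemma coeff3_phi2 : coeff 3 (φ₀ ^ 2) = -1 := by
  rw [φ₀, mul_pow]
  have := PowerSeries.coeff_X_pow_mul (u ^ 2) 2 1
  norm_num at this
  rw [this, sq, coeff_mul_expand]
  simp [coeff_u, Finset.sum_range_succ]
  norm_num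

lemma coeff3_phi3 : coeff 3 (φ₀ ^ 3) = 1 := by
  rw [φ₀, mul_pow]
  have := PowerSeries.coeff_X_pow_mul (u ^ 3) 3 0
  rw [zero_add] at this
  rw [this, coeff_zero_eq_constantCoeff_apply, map_pow]
  simp [u, PowerSeries.constantCoeff_mk]

lemma coeff1_rho (f : PowerSeries ℂ) : coeff 1 (rho f) = coeff 1 f := by
  rw [rho_apply, coeff_subst hφ0]
  rw [show (1:ℕ) + 1 = 2 from rfl, Finset.sum_range_succ, Finset.sum_range_succ,
    Finset.sum_range_zero, pow_zero, pow_one]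
  have h1 : coeff 1 φ₀ = 1 := by have := coeff_phi 0; simpa using this
  simp [coeff_one, h1]

lemma coeff3_rho (f : PowerSeries ℂ) :
    coeff 3 (rho f) = (4:ℂ)⁻¹ * coeff 1 f - coeff 2 f + coeff 3 f := by
  rw [rho_apply, coeff_subst hφ0]
  rw [show (3:ℕ) + 1 = 4 from rfl, Finset.sum_range_succ, Finset.sum_range_succ,
    Finset.sum_range_succ, Finset.sum_range_succ, Finset.sum_range_zero, pow_zero, pow_one]
  have h1 : coeff 3 φ₀ = (4:ℂ)⁻¹ := by have := coeff_phi 2; rw [this]; norm_num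
  rw [h1, coeff3_phi2, coeff3_phi3, coeff_one]
  norm_num
  ring

/-! ### Characterizations of the algebras -/

lemma coeff1_mul (f g : PowerSeries ℂ) :
    coeff 1 (f * g) = coeff 0 f * coeff 1 g + coeff 1 f * coeff 0 g := by
  rw [coeff_mul_expand]
  simp [Finset.sum_range_succ]

lemma coeff2_mul (f g : PowerSeries ℂ) :
    coeff 2 (f * g) = coeff 0 f * coeff 2 g + coeff 1 f * coeff 1 g
      + coeff 2 f * coeff 0 g := by
  rw [coeff_mul_expand]
  simp [Finset.sum_range_succ]

lemma coeff3_mul (f g : PowerSeries ℂ) :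
    coeff 3 (f * g) = coeff 0 f * coeff 3 g + coeff 1 f * coeff 2 g
      + coeff 2 f * coeff 1 g + coeff 3 f * coeff 0 g := by
  rw [coeff_mul_expand]
  simp [Finset.sum_range_succ]

/-- The subalgebra `{f | coeff 1 f = 0 ∧ coeff 3 f = 0}`. -/
def SA : Subalgebra ℂ (PowerSeries ℂ) where
  carrier := {f | coeff 1 f = 0 ∧ coeff 3 f = 0}
  mul_mem' := by
    rintro f g ⟨hf1, hf3⟩ ⟨hg1, hg3⟩
    constructor
    · rw [coeff1_mul, hf1, hg1]; ring
    · rw [coeff3_mul, hf1, hf3, hg1, hg3]; ring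
  one_mem' := by constructor <;> simp [coeff_one]
  add_mem' := by
    rintro f g ⟨hf1, hf3⟩ ⟨hg1, hg3⟩
    constructor <;> simp [hf1, hf3, hg1, hg3]
  zero_mem' := by constructor <;> simp
  algebraMap_mem' := by
    intro a
    rw [PowerSeries.algebraMap_apply]
    constructor <;> simp [coeff_C, Algebra.algebraMap_self_apply]

/-- The subalgebra `{f | coeff 1 f = 0 ∧ coeff 3 f = coeff 2 f}`. -/
def SB : Subalgebra ℂ (PowerSeries ℂ) where
  carrier := {f | coeff 1 f = 0 ∧ coeff 3 f = coeff 2 f}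
  mul_mem' := by
    rintro f g ⟨hf1, hf3⟩ ⟨hg1, hg3⟩
    constructor
    · rw [coeff1_mul, hf1, hg1]; ring
    · rw [coeff3_mul, coeff2_mul, hf1, hf3, hg1, hg3]; ring
  one_mem' := by constructor <;> simp [coeff_one]
  add_mem' := by
    rintro f g ⟨hf1, hf3⟩ ⟨hg1, hg3⟩
    constructor <;> simp [hf1, hf3, hg1, hg3]
  zero_mem' := by constructor <;> simp
  algebraMap_mem' := by
    intro a
    rw [PowerSeries.algebraMap_apply]
    constructor <;> simp [coeff_C, Algebra.algebraMap_self_apply]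

lemma aeval_mem (S : Subalgebra ℂ (PowerSeries ℂ)) {k : ℕ} (x : Fin k → PowerSeries ℂ)
    (hx : ∀ i, x i ∈ S) (p : MvPolynomial (Fin k) ℂ) : MvPolynomial.aeval x p ∈ S := by
  induction p using MvPolynomial.induction_on with
  | C a => rw [MvPolynomial.aeval_C]; exact S.algebraMap_mem a
  | add p q hp hq => rw [map_add]; exact S.add_mem hp hq
  | mul_X p i hp => rw [map_mul, MvPolynomial.aeval_X]; exact S.mul_mem hp (hx i)

lemma coeff_X_pow_mul_small (h : PowerSeries ℂ) {m : ℕ} (hm : m < 4) :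
    coeff m ((X : PowerSeries ℂ) ^ 4 * h) = 0 := by
  rw [PowerSeries.coeff_X_pow_mul' h 4 m, if_neg (by omega)]

lemma charA : adjSet ![(X : PowerSeries ℂ) ^ 2, X ^ 5] 4 =
    {f : PowerSeries ℂ | coeff 1 f = 0 ∧ coeff 3 f = 0} := by
  ext f
  constructor
  · rintro ⟨p, h, rfl⟩
    have hmem : MvPolynomial.aeval ![(X : PowerSeries ℂ) ^ 2, X ^ 5] p ∈ SA := by
      refine aeval_mem SA _ (fun i => ?_) p
      fin_cases i
      · exact ⟨by simp [coeff_X_pow], by simp [coeff_X_pow]⟩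
      · exact ⟨by simp [coeff_X_pow], by simp [coeff_X_pow]⟩
    obtain ⟨h1, h3⟩ := hmem
    constructor
    · rw [map_add, h1, coeff_X_pow_mul_small h (by omega)]; ring
    · rw [map_add, h3, coeff_X_pow_mul_small h (by omega)]; ring
  · rintro ⟨h1, h3⟩
    refine ⟨MvPolynomial.C (coeff 0 f) + MvPolynomial.C (coeff 2 f) * MvPolynomial.X 0,
      ?_⟩
    have haev : MvPolynomial.aeval ![(X : PowerSeries ℂ) ^ 2, X ^ 5]
        (MvPolynomial.C (coeff 0 f) + MvPolynomial.C (coeff 2 f) * MvPolynomial.X 0)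
        = PowerSeries.C (coeff 0 f) + PowerSeries.C (coeff 2 f) * X ^ 2 := by
      simp [MvPolynomial.aeval_C, PowerSeries.algebraMap_apply, Algebra.algebraMap_self_apply]
    have hdvd : (X : PowerSeries ℂ) ^ 4 ∣
        (f - (PowerSeries.C (coeff 0 f) + PowerSeries.C (coeff 2 f) * X ^ 2)) := by
      rw [X_pow_dvd_iff]
      intro m hm
      interval_cases m <;>
        simp [h1, h3, coeff_C, coeff_C_mul, coeff_X_pow]
    obtain ⟨g, hg⟩ := hdvd
    refine ⟨g, ?_⟩
    rw [haev]
    linear_combination hg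

lemma charB : adjSet ![(X : PowerSeries ℂ) ^ 2 + X ^ 3, X ^ 5] 4 =
    {f : PowerSeries ℂ | coeff 1 f = 0 ∧ coeff 3 f = coeff 2 f} := by
  ext f
  constructor
  · rintro ⟨p, h, rfl⟩
    have hmem : MvPolynomial.aeval ![(X : PowerSeries ℂ) ^ 2 + X ^ 3, X ^ 5] p ∈ SB := by
      refine aeval_mem SB _ (fun i => ?_) p
      fin_cases i
      · exact ⟨by simp [coeff_X_pow], by simp [coeff_X_pow]⟩
      · exact ⟨by simp [coeff_X_pow], by simp [coeff_X_pow]⟩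
    obtain ⟨h1, h3⟩ := hmem
    constructor
    · rw [map_add, h1, coeff_X_pow_mul_small h (by omega)]; ring
    · rw [map_add, map_add, h3, coeff_X_pow_mul_small h (by omega),
        coeff_X_pow_mul_small h (by omega)]
  · rintro ⟨h1, h3⟩
    refine ⟨MvPolynomial.C (coeff 0 f) + MvPolynomial.C (coeff 2 f) * MvPolynomial.X 0,
      ?_⟩
    have haev : MvPolynomial.aeval ![(X : PowerSeries ℂ) ^ 2 + X ^ 3, X ^ 5]
        (MvPolynomial.C (coeff 0 f) + MvPolynomial.C (coeff 2 f) * MvPolynomial.X 0)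
        = PowerSeries.C (coeff 0 f) + PowerSeries.C (coeff 2 f) * (X ^ 2 + X ^ 3) := by
      simp [MvPolynomial.aeval_C, PowerSeries.algebraMap_apply, Algebra.algebraMap_self_apply]
    have hdvd : (X : PowerSeries ℂ) ^ 4 ∣
        (f - (PowerSeries.C (coeff 0 f)
          + PowerSeries.C (coeff 2 f) * (X ^ 2 + X ^ 3))) := by
      rw [X_pow_dvd_iff]
      intro m hm
      interval_cases m <;>
        simp [h1, h3, coeff_C, coeff_C_mul, coeff_X_pow]
    obtain ⟨g, hg⟩ := hdvd
    refine ⟨g, ?_⟩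
    rw [haev]
    linear_combination hg

lemma mem_iff (f : PowerSeries ℂ) :
    (coeff 1 f = 0 ∧ coeff 3 f = coeff 2 f) ↔
      (coeff 1 (rho f) = 0 ∧ coeff 3 (rho f) = 0) := by
  rw [coeff1_rho, coeff3_rho]
  constructor
  · rintro ⟨a, b⟩
    exact ⟨a, by rw [a, b]; ring⟩
  · rintro ⟨a, b⟩
    refine ⟨a, ?_⟩
    rw [a] at b
    linear_combination b

end Stmt16Aux

open PowerSeries in
/-- in `ℂ[[t]]`, for `A = ⟨t²,t⁵⟩ + t⁴·ℂ[[t]]` and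
`B = ⟨t²+t³,t⁵⟩ + t⁴·ℂ[[t]]`, there is a `ℂ`-algebra automorphism `ρ` of `ℂ[[t]]` with
`ρ(B) = A`; moreover `A` is the set of power series whose coefficients of `t¹` and `t³`
vanish. -/
theorem stmt16 :
    (∃ ρ : PowerSeries ℂ ≃ₐ[ℂ] PowerSeries ℂ,
      ⇑ρ '' adjSet ![X ^ 2 + X ^ 3, X ^ 5] 4 = adjSet ![(X : PowerSeries ℂ) ^ 2, X ^ 5] 4) ∧
    adjSet ![(X : PowerSeries ℂ) ^ 2, X ^ 5] 4 =
      {f : PowerSeries ℂ | PowerSeries.coeff 1 f = 0 ∧ PowerSeries.coeff 3 f = 0} := by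
  refine ⟨⟨Stmt16Aux.rho, ?_⟩, Stmt16Aux.charA⟩
  rw [Stmt16Aux.charA, Stmt16Aux.charB]
  ext g
  simp only [Set.mem_image, Set.mem_setOf_eq]
  constructor
  · rintro ⟨f, hf, rfl⟩
    exact (Stmt16Aux.mem_iff f).mp hf
  · intro hg
    exact ⟨Stmt16Aux.rho.symm g,
      (Stmt16Aux.mem_iff _).mpr (by rwa [Stmt16Aux.rho.apply_symm_apply]),
      Stmt16Aux.rho.apply_symm_apply g⟩
end
end

section
/- Let Γ be the additive submonoid of ℕ generated by {4, 6, 11} (a numerical semigroup with conductor 14). Then there do not exist f, g ∈ ℂ[[t]] such that the ℂ-subalgebra R := ⟨f, g⟩ + t¹⁴·ℂ[[t]] satisfies Γ_R = Γ. In other words, no closed ℂ-subalgebra of ℂ[[t]] with semigroup Γ can be generated, together with the ideal t¹⁴·ℂ[[t]], by two elements. -/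
noncomputable section

/-!
After subtracting constant terms, one of `f, g` (say `f`) has a nonzero `t⁴` coefficient:
otherwise, as `1, 2, 3 ∉ Γ`, both lie in `ℂ + t⁵ℂ[[t]]`, hence so does the whole algebra,
contradicting `4 ∈ Γ`. Subtracting a multiple of `f` from `g` gives `ord f = 4` and, as `5 ∉ Γ`,
`ord g ≥ 6`; since `6 ∈ Γ` but `7 ∉ Γ`, in fact `ord g = 6`. Modulo `t¹²`, every element of
`⟨f, g⟩ + t¹⁴ℂ[[t]]` is a linear combination of `1, f, g, f², fg`, whose orders `0, 4, 6, 8, 10`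
are distinct, so no element has order `11 ∈ Γ`.
-/

open PowerSeries

local notation "Γ" => AddSubmonoid.closure ({4, 6, 11} : Set ℕ)

namespace PowerSeries

theorem X_pow_dvd_iff_le_order {R : Type*} [Semiring R] {φ : R⟦X⟧} {n : ℕ} :
    X ^ n ∣ φ ↔ (n : ℕ∞) ≤ φ.order := by
  rw [X_pow_dvd_iff]
  exact ⟨nat_le_order φ n, fun h i hi =>
    coeff_of_lt_order i (lt_of_lt_of_le (by exact_mod_cast hi) h)⟩

theorem order_smul_of_ne_zero {K : Type*} [Field K] {a : K} (ha : a ≠ 0) (φ : K⟦X⟧) :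
    (a • φ).order = φ.order := by
  refine le_antisymm ?_ le_order_smul
  calc (a • φ).order ≤ (a⁻¹ • a • φ).order := le_order_smul
    _ = φ.order := by rw [inv_smul_smul₀ ha]

theorem order_finsuppProd_pow {R σ : Type*} [CommSemiring R] [NoZeroDivisors R] [Nontrivial R]
    {x : σ → R⟦X⟧} {w : σ → ℕ} (hx : ∀ i, (x i).order = w i) (d : σ →₀ ℕ) :
    (d.prod fun i k => x i ^ k).order = Finsupp.weight w d := by
  simp [Finsupp.prod, order_prod, order_pow, hx, Finsupp.weight_apply, Finsupp.sum]

theorem exists_order_eq_of_order_sum_smul {K ι : Type*} [Field K] {s : Finset ι} {u : ι → K⟦X⟧}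
    (hu : Set.InjOn (fun i => (u i).order) s) (c : ι → K) {n : ℕ}
    (h : (∑ i ∈ s, c i • u i).order = n) : ∃ i ∈ s, (u i).order = n := by
  classical
  induction s using Finset.induction_on generalizing n with
  | empty => simp at h
  | insert j s hj ih =>
    have hus : Set.InjOn (fun i => (u i).order) s := hu.mono (by simp)
    have hcj {m : ℕ} (hm : (c j • u j).order = m) : (u j).order = m := by
      by_cases hc : c j = 0
      · simp [hc] at hm
      · rwa [order_smul_of_ne_zero hc] at hm
    rw [Finset.sum_insert hj] at h
    by_cases hord : (c j • u j).order = (∑ i ∈ s, c i • u i).order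
    · exfalso
      cases hm : (∑ i ∈ s, c i • u i).order with
      | top =>
        rw [hm, order_eq_top] at hord
        rw [order_eq_top.1 hm, hord, add_zero, order_zero] at h
        exact ENat.top_ne_natCast n h
      | coe m =>
        obtain ⟨i, hi, him⟩ := ih hus hm
        have := hu (by simp) (by simp [hi]) ((hcj (hord.trans hm)).trans him.symm)
        exact hj (this ▸ hi)
    · rw [order_add_of_order_ne _ _ hord] at h
      rcases min_choice (c j • u j).order (∑ i ∈ s, c i • u i).order with hmin | hmin
      · exact ⟨j, by simp, hcj (hmin ▸ h)⟩
      · obtain ⟨i, hi, him⟩ := ih hus (hmin ▸ h)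
        exact ⟨i, by simp [hi], him⟩

end PowerSeries

section Adjoin

variable {k l : ℕ}

def adjSubalgebra (x : Fin k → ℂ⟦X⟧) (c : ℕ) : Subalgebra ℂ ℂ⟦X⟧ where
  carrier := adjSet x c
  mul_mem' := by
    rintro _ _ ⟨p, h, rfl⟩ ⟨q, h', rfl⟩
    exact ⟨p * q, MvPolynomial.aeval x p * h' + h * MvPolynomial.aeval x q + X ^ c * h * h',
      by rw [map_mul]; ring⟩
  add_mem' := by
    rintro _ _ ⟨p, h, rfl⟩ ⟨q, h', rfl⟩
    exact ⟨p + q, h + h', by rw [map_add]; ring⟩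
  algebraMap_mem' a := ⟨MvPolynomial.C a, 0, by simp⟩

theorem mem_adjSet_self (x : Fin k → ℂ⟦X⟧) (c : ℕ) (i : Fin k) : x i ∈ adjSet x c :=
  ⟨(MvPolynomial.X i : MvPolynomial (Fin k) ℂ), 0, by simp⟩

theorem mem_adjSet_of_X_pow_dvd (x : Fin k → ℂ⟦X⟧) {c : ℕ} {f : ℂ⟦X⟧} (hf : X ^ c ∣ f) :
    f ∈ adjSet x c := by
  obtain ⟨h, rfl⟩ := hf
  exact ⟨0, h, by simp⟩

theorem adjSet_subset_adjSet {x : Fin k → ℂ⟦X⟧} {y : Fin l → ℂ⟦X⟧} {c c' : ℕ} (hc : c' ≤ c)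
    (hx : ∀ i, x i ∈ adjSet y c') : adjSet x c ⊆ adjSet y c' := by
  rintro _ ⟨p, h, rfl⟩
  have hadjoin : Algebra.adjoin ℂ (Set.range x) ≤ adjSubalgebra y c' :=
    Algebra.adjoin_le (Set.range_subset_iff.2 hx)
  refine (adjSubalgebra y c').add_mem
    (hadjoin (MvPolynomial.aeval_range (R := ℂ) x ▸ AlgHom.mem_range_self _ p))
    (mem_adjSet_of_X_pow_dvd y (Dvd.dvd.mul_right (pow_dvd_pow X hc) h))

theorem adjSet_eq_of_forall_mem {x y : Fin k → ℂ⟦X⟧} {c : ℕ} (hx : ∀ i, x i ∈ adjSet y c)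
    (hy : ∀ i, y i ∈ adjSet x c) : adjSet x c = adjSet y c :=
  (adjSet_subset_adjSet le_rfl hx).antisymm (adjSet_subset_adjSet le_rfl hy)

end Adjoin

theorem sgp_mono {S T : Set ℂ⟦X⟧} (h : S ⊆ T) : sgp S ⊆ sgp T :=
  fun _ ⟨f, hf, hord⟩ => ⟨f, h hf, hord⟩

theorem X_pow_dvd_of_forall_mem_sgp {S : Set ℂ⟦X⟧} {f : ℂ⟦X⟧} (hf : f ∈ S) {n : ℕ}
    (h : ∀ m < n, m ∈ sgp S → coeff m f = 0) : X ^ n ∣ f := by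
  refine X_pow_dvd_iff.2 fun m hm => ?_
  induction m using Nat.strong_induction_on with
  | _ m ih =>
    by_contra hne
    exact hne (h m hm ⟨f, hf, hne, fun i hi => ih i hi (hi.trans hm)⟩)

/-- Modulo `t^N`, an element of `⟨x⟩ + t^c ℂ[[t]]` is a combination of monomials in the `x i`;
those of weight `< N` have pairwise distinct orders, so no cancellation occurs among them. -/
theorem exists_weight_eq_of_mem_sgp_adjSet {k : ℕ} {x : Fin k → ℂ⟦X⟧} {w : Fin k → ℕ}
    {c N n : ℕ} (hx : ∀ i, (x i).order = w i)
    (hw : Set.InjOn (Finsupp.weight w) {d : Fin k →₀ ℕ | Finsupp.weight w d < N}) (hNc : N ≤ c)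
    (hn : n ∈ sgp (adjSet x c)) (hnN : n < N) : ∃ d : Fin k →₀ ℕ, Finsupp.weight w d = n := by
  classical
  obtain ⟨_, ⟨p, r, rfl⟩, hord⟩ := hn
  set mono : (Fin k →₀ ℕ) → ℂ⟦X⟧ := fun d => d.prod fun i e => x i ^ e
  have hmono (d : Fin k →₀ ℕ) : (mono d).order = Finsupp.weight w d := order_finsuppProd_pow hx d
  set low := ∑ d ∈ p.support.filter (Finsupp.weight w · < N), p.coeff d • mono d
  set high := ∑ d ∈ p.support.filter (¬Finsupp.weight w · < N), p.coeff d • mono d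
  have hsplit : MvPolynomial.aeval x p = low + high := by
    rw [Finset.sum_filter_add_sum_filter_not, MvPolynomial.aeval_def, MvPolynomial.eval₂_eq]
    simp [mono, Finsupp.prod, Algebra.smul_def]
  have hrest : (N : ℕ∞) ≤ (high + X ^ c * r).order := by
    refine X_pow_dvd_iff_le_order.1 (dvd_add (Finset.dvd_sum fun d hd => ?_)
      (Dvd.dvd.mul_right (pow_dvd_pow X hNc) r))
    rw [smul_eq_C_mul]
    refine Dvd.dvd.mul_left (X_pow_dvd_iff_le_order.2 ?_) _
    rw [hmono]
    exact_mod_cast not_lt.1 (Finset.mem_filter.1 hd).2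
  have hlow : low.order = n := by
    set rest := high + X ^ c * r
    have hsum : (low + rest).order = n := by
      rw [← add_assoc, ← hsplit]
      exact order_eq_nat.2 hord
    have hlt : (n : ℕ∞) < rest.order := lt_of_lt_of_le (by exact_mod_cast hnN) hrest
    rw [show low = low + rest + -rest by ring,
      order_add_of_order_ne _ _ (by rw [hsum, order_neg]; exact hlt.ne), hsum, order_neg,
      min_eq_left hlt.le]
  obtain ⟨d, hd, hdn⟩ := exists_order_eq_of_order_sum_smul (u := mono)
    (s := p.support.filter (Finsupp.weight w · < N))
    (fun d hd d' hd' h => hw (Finset.mem_filter.1 hd).2 (Finset.mem_filter.1 hd').2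
      (by simpa [hmono] using h)) p.coeff hlow
  exact ⟨d, by simpa [hmono] using hdn⟩

theorem mem_closure_four_six_eleven {n : ℕ} (hn : n ∈ Γ) : n = 0 ∨ n = 4 ∨ n = 6 ∨ 8 ≤ n := by
  induction hn using AddSubmonoid.closure_induction with
  | mem x hx =>
    simp only [Set.mem_insert_iff, Set.mem_singleton_iff] at hx
    omega
  | zero => simp
  | add _ _ _ _ hx hy => omega

theorem X_pow_dvd_of_sgp_eq {S : Set ℂ⟦X⟧} (hS : sgp S = Γ) {f : ℂ⟦X⟧} (hf : f ∈ S) {n : ℕ}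
    (hn : n ≤ 8) (h0 : coeff 0 f = 0) (h4 : 4 < n → coeff 4 f = 0)
    (h6 : 6 < n → coeff 6 f = 0) : X ^ n ∣ f :=
  X_pow_dvd_of_forall_mem_sgp hf fun m hm hmS => by
    rw [hS] at hmS
    rcases mem_closure_four_six_eleven hmS with rfl | rfl | rfl | h8
    exacts [h0, h4 hm, h6 hm, absurd hm (by omega)]

theorem coeff_four_ne_zero_of_sgp_eq {f g : ℂ⟦X⟧} (hS : sgp (adjSet ![f, g] 14) = Γ)
    (hf0 : coeff 0 f = 0) (hg0 : coeff 0 g = 0) : coeff 4 f ≠ 0 ∨ coeff 4 g ≠ 0 := by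
  by_contra! h
  have hsub : adjSet ![f, g] 14 ⊆ adjSet ![] 5 := by
    refine adjSet_subset_adjSet (by norm_num) (Fin.forall_fin_two.2 ⟨?_, ?_⟩) <;>
      refine mem_adjSet_of_X_pow_dvd _ (X_pow_dvd_of_sgp_eq hS (mem_adjSet_self _ _ _)
        (by norm_num) ?_ (fun _ => ?_) (by omega)) <;> simp [hf0, hg0, h.1, h.2]
  have h4 : 4 ∈ sgp (adjSet ![] 5) :=
    sgp_mono hsub (hS ▸ AddSubmonoid.subset_closure (by simp))
  obtain ⟨d, hd⟩ := exists_weight_eq_of_mem_sgp_adjSet (w := ![]) (fun i => i.elim0)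
    (fun d _ d' _ _ => Subsingleton.elim d d') le_rfl h4 (by norm_num)
  simp [Finsupp.weight_eq_sum] at hd

theorem coeff_six_ne_zero_of_sgp_eq {f G : ℂ⟦X⟧} (hS : sgp (adjSet ![f, G] 14) = Γ)
    (hf : f.order = 4) (hG : X ^ 6 ∣ G) : coeff 6 G ≠ 0 := by
  intro h6
  have hG8 : X ^ 8 ∣ G :=
    X_pow_dvd_of_sgp_eq hS (mem_adjSet_self _ _ 1) le_rfl (X_pow_dvd_iff.1 hG 0 (by norm_num))
      (fun _ => X_pow_dvd_iff.1 hG 4 (by norm_num)) (fun _ => h6)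
  have hsub : adjSet ![f, G] 14 ⊆ adjSet ![f] 8 :=
    adjSet_subset_adjSet (by norm_num)
      (Fin.forall_fin_two.2 ⟨mem_adjSet_self _ _ 0, mem_adjSet_of_X_pow_dvd _ hG8⟩)
  have h6 : 6 ∈ sgp (adjSet ![f] 8) :=
    sgp_mono hsub (hS ▸ AddSubmonoid.subset_closure (by simp))
  have hweight (d : Fin 1 →₀ ℕ) : Finsupp.weight ![4] d = d 0 * 4 := by
    simp [Finsupp.weight_eq_sum]
  obtain ⟨d, hd⟩ := exists_weight_eq_of_mem_sgp_adjSet (w := ![4]) (by simpa using hf)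
    (fun d _ d' _ h => Finsupp.ext fun i => by fin_cases i; simpa [hweight] using h) le_rfl h6
    (by norm_num)
  rw [hweight] at hd
  omega

theorem eleven_notMem_sgp {f G : ℂ⟦X⟧} (hf : f.order = 4) (hG : G.order = 6) :
    11 ∉ sgp (adjSet ![f, G] 14) := by
  intro h11
  have hweight (d : Fin 2 →₀ ℕ) : Finsupp.weight ![4, 6] d = d 0 * 4 + d 1 * 6 := by
    simp [Finsupp.weight_eq_sum]
  obtain ⟨d, hd⟩ := exists_weight_eq_of_mem_sgp_adjSet (w := ![4, 6]) (N := 12)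
    (Fin.forall_fin_two.2 ⟨by simpa using hf, by simpa using hG⟩)
    (fun d hd d' hd' h => by
      simp only [Set.mem_ofPred_eq, hweight] at hd hd' h
      ext i; fin_cases i <;> simp <;> omega)
    (by norm_num) h11 (by norm_num)
  rw [hweight] at hd
  omega

theorem false_of_sgp_eq_of_coeff_four_ne_zero {f g : ℂ⟦X⟧} (hS : sgp (adjSet ![f, g] 14) = Γ)
    (hf0 : coeff 0 f = 0) (hg0 : coeff 0 g = 0) (hf4 : coeff 4 f ≠ 0) : False := by
  set G := g - (coeff 4 g / coeff 4 f) • f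
  have hadj : adjSet ![f, G] 14 = adjSet ![f, g] 14 := by
    refine adjSet_eq_of_forall_mem (Fin.forall_fin_two.2 ⟨mem_adjSet_self _ _ 0, ?_⟩)
      (Fin.forall_fin_two.2 ⟨mem_adjSet_self _ _ 0, ?_⟩)
    · exact ⟨MvPolynomial.X 1 - (coeff 4 g / coeff 4 f) • MvPolynomial.X 0, 0, by simp [G]⟩
    · exact ⟨MvPolynomial.X 1 + (coeff 4 g / coeff 4 f) • MvPolynomial.X 0, 0, by simp [G]⟩
  rw [← hadj] at hS
  have hf : f.order = 4 := order_eq_nat.2 ⟨hf4, X_pow_dvd_iff.1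
    (X_pow_dvd_of_sgp_eq hS (mem_adjSet_self _ _ 0) (by norm_num) hf0 (by norm_num) (by norm_num))⟩
  have hG6 : X ^ 6 ∣ G := X_pow_dvd_of_sgp_eq hS (f := G) (mem_adjSet_self _ _ 1) (by norm_num)
    (by rw [map_sub, map_smul, hf0, hg0, smul_zero, sub_zero]) (fun _ => by simp [G, hf4])
    (by norm_num)
  have hG : G.order = 6 :=
    order_eq_nat.2 ⟨coeff_six_ne_zero_of_sgp_eq hS hf hG6, X_pow_dvd_iff.1 hG6⟩
  exact eleven_notMem_sgp hf hG (hS ▸ AddSubmonoid.subset_closure (by simp))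

/-- for `Γ = ⟨4,6,11⟩` (conductor 14), no subalgebra of the form
`⟨f,g⟩ + t¹⁴·ℂ[[t]]` has semigroup `Γ`: the semigroup is not that of a plane curve
singularity. -/
theorem stmt17 :
    ¬∃ f g : PowerSeries ℂ,
      sgp (adjSet ![f, g] 14) =
        (AddSubmonoid.closure ({4, 6, 11} : Set ℕ) : Set ℕ) := by
  rintro ⟨f, g, hS⟩
  set f' := f - C (coeff 0 f)
  set g' := g - C (coeff 0 g)
  have hadj : adjSet ![f', g'] 14 = adjSet ![f, g] 14 := by
    refine adjSet_eq_of_forall_mem (Fin.forall_fin_two.2 ⟨?_, ?_⟩) (Fin.forall_fin_two.2 ⟨?_, ?_⟩)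
    · exact ⟨MvPolynomial.X 0 - MvPolynomial.C (coeff 0 f), 0, by simp [f']⟩
    · exact ⟨MvPolynomial.X 1 - MvPolynomial.C (coeff 0 g), 0, by simp [g']⟩
    · exact ⟨MvPolynomial.X 0 + MvPolynomial.C (coeff 0 f), 0, by simp [f']⟩
    · exact ⟨MvPolynomial.X 1 + MvPolynomial.C (coeff 0 g), 0, by simp [g']⟩
  have hswap : adjSet ![g', f'] 14 = adjSet ![f', g'] 14 :=
    adjSet_eq_of_forall_mem (Fin.forall_fin_two.2 ⟨mem_adjSet_self _ _ 1, mem_adjSet_self _ _ 0⟩)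
      (Fin.forall_fin_two.2 ⟨mem_adjSet_self _ _ 1, mem_adjSet_self _ _ 0⟩)
  rw [← hadj] at hS
  have hf0 : coeff 0 f' = 0 := by simp [f']
  have hg0 : coeff 0 g' = 0 := by simp [g']
  rcases coeff_four_ne_zero_of_sgp_eq hS hf0 hg0 with h4 | h4
  · exact false_of_sgp_eq_of_coeff_four_ne_zero hS hf0 hg0 h4
  · exact false_of_sgp_eq_of_coeff_four_ne_zero (hswap ▸ hS) hg0 hf0 h4
end
end
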